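/- arXiv:2304.02441 — 8 statements merged into one kernel-verified Lean document; each statement's English description precedes it below -/
import Mathlib

section
/- Let Y = (y_1,…,y_m) satisfy the first-order maximality condition for Φ(X, Λ, ·) and let Ỹ = (ỹ_1,…,ỹ_m) satisfy the first-order maximality condition for Φ(X̃, Λ, ·) with the same multiplier Λ, where X = (x_1,…,x_m) and X̃ = (x̃_1,…,x̃_m) are tuples in (ℝ^{n₁})^m. Then Σ_{i=1}^m ‖y_i − ỹ_i‖² ≤ κ² Σ_{i=1}^m ‖x_i − x̃_i‖², where κ = L/μ. -/
open scoped BigOperators RealInnerProductSpace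

set_option maxHeartbeats 1000000

/-- Lipschitz continuity of the solution map `S_Φ` in `X` for fixed
multiplier `Λ`: if `Y` satisfies the first-order maximality condition for `Φ(X, Λ, ·)`
and `Ỹ` that for `Φ(X̃, Λ, ·)`, then `Σ ‖y_i − ỹ_i‖² ≤ κ² Σ ‖x_i − x̃_i‖²`, `κ = L/μ`. -/
theorem dgdmax_solution_map_lipschitz_in_X
    {m n₁ n₂ : ℕ} (hm : 0 < m) (hn₁ : 0 < n₁) (hn₂ : 0 < n₂)
    (L μ : ℝ) (hμ : 0 < μ) (hLμ : μ ≤ L)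
    (f : Fin m → EuclideanSpace ℝ (Fin n₁) → EuclideanSpace ℝ (Fin n₂) → ℝ)
    (Gx : Fin m → EuclideanSpace ℝ (Fin n₁) → EuclideanSpace ℝ (Fin n₂) →
      EuclideanSpace ℝ (Fin n₁))
    (Gy : Fin m → EuclideanSpace ℝ (Fin n₁) → EuclideanSpace ℝ (Fin n₂) →
      EuclideanSpace ℝ (Fin n₂))
    (hGx : ∀ i x y, HasGradientAt (fun x' => f i x' y) (Gx i x y) x)
    (hGy : ∀ i x y, HasGradientAt (fun y' => f i x y') (Gy i x y) y)
    (hLip : ∀ i x y x' y',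
      ‖Gx i x y - Gx i x' y'‖ ^ 2 + ‖Gy i x y - Gy i x' y'‖ ^ 2
        ≤ L ^ 2 * (‖x - x'‖ ^ 2 + ‖y - y'‖ ^ 2))
    (hconc : ∀ i x y y', ⟪y - y', Gy i x y - Gy i x y'⟫ ≤ -μ * ‖y - y'‖ ^ 2)
    (h : EuclideanSpace ℝ (Fin n₂) → ℝ) (hconv : ConvexOn ℝ Set.univ h)
    (w : Fin m → Fin m → ℝ)
    (X X' : Fin m → EuclideanSpace ℝ (Fin n₁))
    (Λ : Fin m → EuclideanSpace ℝ (Fin n₂))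
    (Y Y' : Fin m → EuclideanSpace ℝ (Fin n₂))
    (hY : ∃ ζ : Fin m → EuclideanSpace ℝ (Fin n₂),
      (∀ i, ∀ z, h (Y i) + ⟪ζ i, z - Y i⟫ ≤ h z) ∧
      (∀ i, (1 / (m : ℝ)) • (Gy i (X i) (Y i) - ζ i)
          = (L / (2 * Real.sqrt (m : ℝ))) •
              ∑ j, (w j i - if i = j then 1 else 0) • Λ j))
    (hY' : ∃ ζ : Fin m → EuclideanSpace ℝ (Fin n₂),
      (∀ i, ∀ z, h (Y' i) + ⟪ζ i, z - Y' i⟫ ≤ h z) ∧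
      (∀ i, (1 / (m : ℝ)) • (Gy i (X' i) (Y' i) - ζ i)
          = (L / (2 * Real.sqrt (m : ℝ))) •
              ∑ j, (w j i - if i = j then 1 else 0) • Λ j)) :
    ∑ i, ‖Y i - Y' i‖ ^ 2 ≤ (L / μ) ^ 2 * ∑ i, ‖X i - X' i‖ ^ 2 := by

  obtain ⟨ζ, hζsub, hζst⟩ := hY
  obtain ⟨ζ', hζ'sub, hζ'st⟩ := hY'
  have hmne : (1 / (m : ℝ)) ≠ 0 := by
    positivity
  have key : ∀ i, ‖Y i - Y' i‖ ^ 2 ≤ (L / μ) ^ 2 * ‖X i - X' i‖ ^ 2 := by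
    intro i
    -- stationarity equality
    have heq : Gy i (X i) (Y i) - ζ i = Gy i (X' i) (Y' i) - ζ' i := by
      have := (hζst i).trans (hζ'st i).symm
      exact smul_right_injective (EuclideanSpace ℝ (Fin n₂)) hmne this
    have heq2 : Gy i (X i) (Y i) - Gy i (X' i) (Y' i) = ζ i - ζ' i := by
      rw [sub_eq_sub_iff_sub_eq_sub]; exact heq
    -- subgradient monotonicity
    have hmono : (0 : ℝ) ≤ ⟪Y i - Y' i, ζ i - ζ' i⟫ := by
      have h1 := hζsub i (Y' i)
      have h2 := hζ'sub i (Y i)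
      have e1 : ⟪Y i - Y' i, ζ i - ζ' i⟫
          = -(⟪ζ i, Y' i - Y i⟫) - ⟪ζ' i, Y i - Y' i⟫ := by
        rw [real_inner_comm]
        simp [inner_sub_left, inner_sub_right]
        ring
      rw [e1]
      linarith
    -- strong concavity
    have hc := hconc i (X' i) (Y i) (Y' i)
    -- split
    have hsplit : ⟪Y i - Y' i, ζ i - ζ' i⟫
        = ⟪Y i - Y' i, Gy i (X i) (Y i) - Gy i (X' i) (Y i)⟫
          + ⟪Y i - Y' i, Gy i (X' i) (Y i) - Gy i (X' i) (Y' i)⟫ := by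
      rw [← inner_add_right, ← heq2]
      congr 1
      abel
    have hkey : μ * ‖Y i - Y' i‖ ^ 2
        ≤ ⟪Y i - Y' i, Gy i (X i) (Y i) - Gy i (X' i) (Y i)⟫ := by
      nlinarith [hmono, hc, hsplit]
    have hcs : ⟪Y i - Y' i, Gy i (X i) (Y i) - Gy i (X' i) (Y i)⟫
        ≤ ‖Y i - Y' i‖ * ‖Gy i (X i) (Y i) - Gy i (X' i) (Y i)‖ :=
      real_inner_le_norm _ _
    have hlip := hLip i (X i) (Y i) (X' i) (Y i)
    have hGnorm : ‖Gy i (X i) (Y i) - Gy i (X' i) (Y i)‖ ^ 2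
        ≤ L ^ 2 * ‖X i - X' i‖ ^ 2 := by
      have h0 : (0:ℝ) ≤ ‖Gx i (X i) (Y i) - Gx i (X' i) (Y i)‖ ^ 2 := by positivity
      simp only [sub_self, norm_zero] at hlip
      nlinarith
    have hLpos : 0 < L := lt_of_lt_of_le hμ hLμ
    have hGnorm' : ‖Gy i (X i) (Y i) - Gy i (X' i) (Y i)‖ ≤ L * ‖X i - X' i‖ := by
      have h1 : (0:ℝ) ≤ L * ‖X i - X' i‖ := by positivity
      nlinarith [norm_nonneg (Gy i (X i) (Y i) - Gy i (X' i) (Y i))]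
    rcases eq_or_lt_of_le (norm_nonneg (Y i - Y' i)) with h0 | h0
    · have hz : ‖Y i - Y' i‖ ^ 2 = 0 := by rw [← h0]; ring
      rw [hz]
      positivity
    · have hμY : μ * ‖Y i - Y' i‖ ≤ L * ‖X i - X' i‖ := by
        nlinarith [hkey, hcs, hGnorm', h0]
      have hLμdiv : ‖Y i - Y' i‖ ≤ (L / μ) * ‖X i - X' i‖ := by
        rw [div_mul_eq_mul_div, le_div_iff₀ hμ]
        linarith [hμY]
      have hsq := mul_self_le_mul_self (norm_nonneg (Y i - Y' i)) hLμdiv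
      calc ‖Y i - Y' i‖ ^ 2 = ‖Y i - Y' i‖ * ‖Y i - Y' i‖ := sq (‖Y i - Y' i‖) ▸ rfl
        _ ≤ ((L / μ) * ‖X i - X' i‖) * ((L / μ) * ‖X i - X' i‖) := hsq
        _ = (L / μ) ^ 2 * ‖X i - X' i‖ ^ 2 := by ring
  calc ∑ i, ‖Y i - Y' i‖ ^ 2 ≤ ∑ i, (L / μ) ^ 2 * ‖X i - X' i‖ ^ 2 :=
        Finset.sum_le_sum fun i _ => key i
    _ = (L / μ) ^ 2 * ∑ i, ‖X i - X' i‖ ^ 2 := by rw [Finset.mul_sum]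
end

section
/- Suppose in addition that the spectral (operator 2-)norm of W − I is at most 2, i.e. ‖(W − I)v‖ ≤ 2‖v‖ and ‖(W − I)ᵀv‖ ≤ 2‖v‖ for all v ∈ ℝ^m. Let Y = (y_1,…,y_m) satisfy the first-order maximality condition for Φ(X, Λ, ·) and let Ỹ = (ỹ_1,…,ỹ_m) satisfy the first-order maximality condition for Φ(X̃, Λ̃, ·). Then Σ_{i=1}^m ‖y_i − ỹ_i‖² ≤ 2κ² Σ_{i=1}^m ‖x_i − x̃_i‖² + 2mκ² Σ_{i=1}^m ‖λ_i − λ̃_i‖², where κ = L/μ. -/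
open scoped BigOperators RealInnerProductSpace

/-!
The first-order conditions at `Y` and `Ỹ` differ, node by node, by `√m L / 2` times the `i`-th
component of `(W − I)ᵀ(Λ − Λ̃)`. Pairing this difference with `yᵢ − ỹᵢ`, strong concavity of
`f_i(xᵢ, ·)` gives `μ ‖yᵢ − ỹᵢ‖²` on one side, monotonicity of the subdifferential of `h` lets us
drop the subgradients, and the remaining terms are bounded by Cauchy–Schwarz and the Lipschitz
continuity of `∇_y f_i` in `x`. Squaring, summing over the nodes and using `‖(W − I)ᵀ‖₂ ≤ 2`
(applied coordinatewise) gives the estimate.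
-/

theorem sub_eq_smul_sum_smul_sub_of_inv_smul_eq {K M ι : Type*} [Field K] [AddCommGroup M]
    [Module K M] [Fintype ι] {m c : K} (hm : m ≠ 0) {a a' : M}
    {b : ι → K} {v v' : ι → M} (ha : (1 / m) • a = c • ∑ j, b j • v j)
    (ha' : (1 / m) • a' = c • ∑ j, b j • v' j) :
    a - a' = (m * c) • ∑ j, b j • (v j - v' j) := by
  refine smul_right_injective M (one_div_ne_zero hm) ?_
  dsimp only
  rw [smul_smul, one_div, inv_mul_cancel_left₀ hm, ← one_div, smul_sub, ha, ha', ← smul_sub,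
    ← Finset.sum_sub_distrib]
  simp only [smul_sub]

section InnerProductSpace

variable {E : Type*} [NormedAddCommGroup E] [InnerProductSpace ℝ E]

theorem inner_sub_sub_nonneg_of_subgradient {h : E → ℝ} {y y' ζ ζ' : E}
    (hζ : ∀ z, h y + ⟪ζ, z - y⟫ ≤ h z) (hζ' : ∀ z, h y' + ⟪ζ', z - y'⟫ ≤ h z) :
    0 ≤ ⟪y - y', ζ - ζ'⟫ := by
  have h₁ := hζ y'
  have h₂ := hζ' y
  have e₁ : ⟪ζ, y' - y⟫ = -⟪y - y', ζ⟫ := by rw [← neg_sub, inner_neg_right, real_inner_comm]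
  have e₂ : ⟪ζ', y - y'⟫ = ⟪y - y', ζ'⟫ := real_inner_comm _ _
  rw [inner_sub_right]
  linarith

theorem mul_norm_le_norm_of_mul_norm_sq_le_inner {μ : ℝ} {u v : E}
    (huv : μ * ‖u‖ ^ 2 ≤ ⟪u, v⟫) : μ * ‖u‖ ≤ ‖v‖ := by
  rcases (norm_nonneg u).eq_or_lt with hu | hu
  · rw [← hu, mul_zero]
    exact norm_nonneg v
  · refine le_of_mul_le_mul_left ?_ hu
    linarith [real_inner_le_norm u v]

theorem mul_norm_sub_le_of_subgradient_optimality {μ : ℝ} {h : E → ℝ} {g g' : E → E}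
    {y y' ζ ζ' : E} (hg : ⟪y - y', g y - g y'⟫ ≤ -μ * ‖y - y'‖ ^ 2)
    (hζ : ∀ z, h y + ⟪ζ, z - y⟫ ≤ h z) (hζ' : ∀ z, h y' + ⟪ζ', z - y'⟫ ≤ h z) :
    μ * ‖y - y'‖ ≤ ‖g y' - g' y'‖ + ‖(g y - ζ) - (g' y' - ζ')‖ := by
  have hmono := inner_sub_sub_nonneg_of_subgradient hζ hζ'
  refine (mul_norm_le_norm_of_mul_norm_sq_le_inner ?_).trans (norm_sub_le _ _)
  have e : (g y' - g' y') - ((g y - ζ) - (g' y' - ζ')) = -(g y - g y') + (ζ - ζ') := by abel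
  rw [e, inner_add_right, inner_neg_right]
  linarith

theorem sq_mul_norm_sub_le_of_subgradient_optimality {μ : ℝ} {h : E → ℝ} {g g' : E → E}
    {y y' ζ ζ' : E} (hμ : 0 ≤ μ) (hg : ⟪y - y', g y - g y'⟫ ≤ -μ * ‖y - y'‖ ^ 2)
    (hζ : ∀ z, h y + ⟪ζ, z - y⟫ ≤ h z) (hζ' : ∀ z, h y' + ⟪ζ', z - y'⟫ ≤ h z) :
    μ ^ 2 * ‖y - y'‖ ^ 2 ≤ 2 * ‖g y' - g' y'‖ ^ 2 + 2 * ‖(g y - ζ) - (g' y' - ζ')‖ ^ 2 := by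
  calc μ ^ 2 * ‖y - y'‖ ^ 2 = (μ * ‖y - y'‖) ^ 2 := by ring
    _ ≤ (‖g y' - g' y'‖ + ‖(g y - ζ) - (g' y' - ζ')‖) ^ 2 :=
      pow_le_pow_left₀ (by positivity) (mul_norm_sub_le_of_subgradient_optimality hg hζ hζ') 2
    _ ≤ _ := by linarith [add_sq_le (a := ‖g y' - g' y'‖) (b := ‖(g y - ζ) - (g' y' - ζ')‖)]

end InnerProductSpace

theorem sum_norm_sq_sum_smul_le {ι ι' κ : Type*} [Fintype ι] [Fintype ι'] [Fintype κ]
    (a : ι → ι' → ℝ) {C : ℝ}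
    (ha : ∀ v : ι' → ℝ, ∑ i, (∑ j, a i j * v j) ^ 2 ≤ C * ∑ j, v j ^ 2)
    (z : ι' → EuclideanSpace ℝ κ) :
    ∑ i, ‖∑ j, a i j • z j‖ ^ 2 ≤ C * ∑ j, ‖z j‖ ^ 2 := by
  simp only [EuclideanSpace.norm_sq_eq, Real.norm_eq_abs, sq_abs]
  calc ∑ i, ∑ k, ((∑ j, a i j • z j) k) ^ 2 = ∑ k, ∑ i, (∑ j, a i j * z j k) ^ 2 := by
        rw [Finset.sum_comm]
        simp [WithLp.ofLp_sum, Finset.sum_apply]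
    _ ≤ ∑ k, C * ∑ j, z j k ^ 2 := Finset.sum_le_sum fun k _ => ha fun j => z j k
    _ = C * ∑ j, ∑ k, z j k ^ 2 := by rw [← Finset.mul_sum, Finset.sum_comm]

theorem dgdmax_solution_map_lipschitz_general
    {m n₁ n₂ : ℕ}
    (L μ : ℝ) (hμ : 0 < μ)
    (Gx : Fin m → EuclideanSpace ℝ (Fin n₁) → EuclideanSpace ℝ (Fin n₂) →
      EuclideanSpace ℝ (Fin n₁))
    (Gy : Fin m → EuclideanSpace ℝ (Fin n₁) → EuclideanSpace ℝ (Fin n₂) →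
      EuclideanSpace ℝ (Fin n₂))
    (hLip : ∀ i x y x' y',
      ‖Gx i x y - Gx i x' y'‖ ^ 2 + ‖Gy i x y - Gy i x' y'‖ ^ 2
        ≤ L ^ 2 * (‖x - x'‖ ^ 2 + ‖y - y'‖ ^ 2))
    (hconc : ∀ i x y y', ⟪y - y', Gy i x y - Gy i x y'⟫ ≤ -μ * ‖y - y'‖ ^ 2)
    (h : EuclideanSpace ℝ (Fin n₂) → ℝ)
    (w : Fin m → Fin m → ℝ)
    -- `‖W − I‖₂ ≤ 2` (squared form), for `W − I` and its transpose
    (hWIt : ∀ v : Fin m → ℝ,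
      ∑ i, (∑ j, (w j i - if i = j then 1 else 0) * v j) ^ 2 ≤ 4 * ∑ i, (v i) ^ 2)
    (X X' : Fin m → EuclideanSpace ℝ (Fin n₁))
    (Λ Λ' : Fin m → EuclideanSpace ℝ (Fin n₂))
    (Y Y' : Fin m → EuclideanSpace ℝ (Fin n₂))
    (hY : ∃ ζ : Fin m → EuclideanSpace ℝ (Fin n₂),
      (∀ i, ∀ z, h (Y i) + ⟪ζ i, z - Y i⟫ ≤ h z) ∧
      (∀ i, (1 / (m : ℝ)) • (Gy i (X i) (Y i) - ζ i)
          = (L / (2 * Real.sqrt (m : ℝ))) •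
              ∑ j, (w j i - if i = j then 1 else 0) • Λ j))
    (hY' : ∃ ζ : Fin m → EuclideanSpace ℝ (Fin n₂),
      (∀ i, ∀ z, h (Y' i) + ⟪ζ i, z - Y' i⟫ ≤ h z) ∧
      (∀ i, (1 / (m : ℝ)) • (Gy i (X' i) (Y' i) - ζ i)
          = (L / (2 * Real.sqrt (m : ℝ))) •
              ∑ j, (w j i - if i = j then 1 else 0) • Λ' j)) :
    ∑ i, ‖Y i - Y' i‖ ^ 2
      ≤ 2 * (L / μ) ^ 2 * ∑ i, ‖X i - X' i‖ ^ 2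
        + 2 * (m : ℝ) * (L / μ) ^ 2 * ∑ i, ‖Λ i - Λ' i‖ ^ 2 := by
  obtain ⟨ζ, hζ, hopt⟩ := hY
  obtain ⟨ζ', hζ', hopt'⟩ := hY'
  set D : Fin m → EuclideanSpace ℝ (Fin n₂) :=
    fun i => ∑ j, (w j i - if i = j then 1 else 0) • (Λ j - Λ' j)
  have hnode : ∀ i, μ ^ 2 * ‖Y i - Y' i‖ ^ 2
      ≤ 2 * L ^ 2 * ‖X i - X' i‖ ^ 2 + (m : ℝ) / 2 * L ^ 2 * ‖D i‖ ^ 2 := by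
    intro i
    have hm : (0 : ℝ) < m := Nat.cast_pos.mpr i.pos
    have hcross : ‖Gy i (X i) (Y' i) - Gy i (X' i) (Y' i)‖ ^ 2 ≤ L ^ 2 * ‖X i - X' i‖ ^ 2 := by
      simpa using (le_add_of_nonneg_left (sq_nonneg _)).trans
        (hLip i (X i) (Y' i) (X' i) (Y' i))
    have hscale : ((m : ℝ) * (L / (2 * Real.sqrt m))) ^ 2 = (m : ℝ) / 4 * L ^ 2 := by
      field_simp
      rw [Real.sq_sqrt hm.le]
      ring
    have hsq := sq_mul_norm_sub_le_of_subgradient_optimality (g' := Gy i (X' i)) hμ.le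
      (hconc i (X i) (Y i) (Y' i)) (hζ i) (hζ' i)
    rw [sub_eq_smul_sum_smul_sub_of_inv_smul_eq hm.ne' (hopt i) (hopt' i), norm_smul, mul_pow,
      Real.norm_eq_abs, sq_abs, hscale] at hsq
    linarith
  have hD : ∑ i, ‖D i‖ ^ 2 ≤ 4 * ∑ i, ‖Λ i - Λ' i‖ ^ 2 := sum_norm_sq_sum_smul_le _ hWIt _
  have hsum := Finset.sum_le_sum fun i (_ : i ∈ Finset.univ) => hnode i
  rw [← Finset.mul_sum, Finset.sum_add_distrib, ← Finset.mul_sum, ← Finset.mul_sum] at hsum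
  calc ∑ i, ‖Y i - Y' i‖ ^ 2 = (μ ^ 2 * ∑ i, ‖Y i - Y' i‖ ^ 2) / μ ^ 2 := by field_simp
    _ ≤ (2 * L ^ 2 * ∑ i, ‖X i - X' i‖ ^ 2 + 2 * m * L ^ 2 * ∑ i, ‖Λ i - Λ' i‖ ^ 2) / μ ^ 2 := by
      gcongr
      linarith [mul_le_mul_of_nonneg_left hD (by positivity : (0 : ℝ) ≤ (m : ℝ) / 2 * L ^ 2)]
    _ = _ := by ring

/-- Lipschitz continuity of the solution map `S_Φ` in `(X, Λ)`:
if `‖W − I‖₂ ≤ 2`, `Y` satisfies the first-order maximality condition for `Φ(X, Λ, ·)`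
and `Ỹ` that for `Φ(X̃, Λ̃, ·)`, then
`Σ ‖y_i − ỹ_i‖² ≤ 2κ² Σ ‖x_i − x̃_i‖² + 2mκ² Σ ‖λ_i − λ̃_i‖²`, where `κ = L/μ`. -/
theorem dgdmax_solution_map_lipschitz
    {m n₁ n₂ : ℕ} (hm : 0 < m) (hn₁ : 0 < n₁) (hn₂ : 0 < n₂)
    (L μ : ℝ) (hμ : 0 < μ) (hLμ : μ ≤ L)
    (f : Fin m → EuclideanSpace ℝ (Fin n₁) → EuclideanSpace ℝ (Fin n₂) → ℝ)
    (Gx : Fin m → EuclideanSpace ℝ (Fin n₁) → EuclideanSpace ℝ (Fin n₂) →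
      EuclideanSpace ℝ (Fin n₁))
    (Gy : Fin m → EuclideanSpace ℝ (Fin n₁) → EuclideanSpace ℝ (Fin n₂) →
      EuclideanSpace ℝ (Fin n₂))
    (hGx : ∀ i x y, HasGradientAt (fun x' => f i x' y) (Gx i x y) x)
    (hGy : ∀ i x y, HasGradientAt (fun y' => f i x y') (Gy i x y) y)
    (hLip : ∀ i x y x' y',
      ‖Gx i x y - Gx i x' y'‖ ^ 2 + ‖Gy i x y - Gy i x' y'‖ ^ 2
        ≤ L ^ 2 * (‖x - x'‖ ^ 2 + ‖y - y'‖ ^ 2))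
    (hconc : ∀ i x y y', ⟪y - y', Gy i x y - Gy i x y'⟫ ≤ -μ * ‖y - y'‖ ^ 2)
    (h : EuclideanSpace ℝ (Fin n₂) → ℝ) (hconv : ConvexOn ℝ Set.univ h)
    (w : Fin m → Fin m → ℝ)
    -- `‖W − I‖₂ ≤ 2` (squared form), for `W − I` and its transpose
    (hWI : ∀ v : Fin m → ℝ,
      ∑ i, (∑ j, (w i j - if i = j then 1 else 0) * v j) ^ 2 ≤ 4 * ∑ i, (v i) ^ 2)
    (hWIt : ∀ v : Fin m → ℝ,
      ∑ i, (∑ j, (w j i - if i = j then 1 else 0) * v j) ^ 2 ≤ 4 * ∑ i, (v i) ^ 2)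
    (X X' : Fin m → EuclideanSpace ℝ (Fin n₁))
    (Λ Λ' : Fin m → EuclideanSpace ℝ (Fin n₂))
    (Y Y' : Fin m → EuclideanSpace ℝ (Fin n₂))
    (hY : ∃ ζ : Fin m → EuclideanSpace ℝ (Fin n₂),
      (∀ i, ∀ z, h (Y i) + ⟪ζ i, z - Y i⟫ ≤ h z) ∧
      (∀ i, (1 / (m : ℝ)) • (Gy i (X i) (Y i) - ζ i)
          = (L / (2 * Real.sqrt (m : ℝ))) •
              ∑ j, (w j i - if i = j then 1 else 0) • Λ j))
    (hY' : ∃ ζ : Fin m → EuclideanSpace ℝ (Fin n₂),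
      (∀ i, ∀ z, h (Y' i) + ⟪ζ i, z - Y' i⟫ ≤ h z) ∧
      (∀ i, (1 / (m : ℝ)) • (Gy i (X' i) (Y' i) - ζ i)
          = (L / (2 * Real.sqrt (m : ℝ))) •
              ∑ j, (w j i - if i = j then 1 else 0) • Λ' j)) :
    ∑ i, ‖Y i - Y' i‖ ^ 2
      ≤ 2 * (L / μ) ^ 2 * ∑ i, ‖X i - X' i‖ ^ 2
        + 2 * (m : ℝ) * (L / μ) ^ 2 * ∑ i, ‖Λ i - Λ' i‖ ^ 2 :=
  dgdmax_solution_map_lipschitz_general L μ hμ Gx Gy hLip hconc h w hWIt X X' Λ Λ' Y Y' hY hY'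
end

section
/- Let L > 0, μ > 0 with κ = L/μ ≥ 1, let ρ ∈ [0, 1), let m ≥ 1 be an integer. Define η_x = (1−ρ)²/(5L√(1+6κ²)), η_λ = (1−ρ)²/(L(9κ+2)), L_P = L√(4κ²+1), c = (ρ²/(2mη_x) + L(4κ+1)/(2m) + 4L²(1+6κ²)/(mL_P(1−ρ)²)) / (1 − ρ − 8η_x²L²(1+6κ²)/(1−ρ)³), α_x = (1/(2m))(1/η_x − 2L_P − L(κ+1)), α̃_x = 1/(2mη_x) − L²(1+6κ²)/(mL_P(1−ρ)²) − 2cL²(1+6κ²)η_x²/(1−ρ)³, and α_λ = (1/η_λ − Lκ/2 − L_P/2) − 3L²κ²/(L_P(1−ρ)²) − 6cmL²κ²η_x²/(1−ρ)³. Then α_x ≥ L(4κ+1)/(2m(1−ρ)²), α̃_x ≥ 3L(1+4κ)/(25m(1−ρ)²), and α_λ ≥ L(4κ+1)/(1−ρ)². -/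
set_option maxHeartbeats 2000000 in

/-- Lower bounds on the coefficients `α_x`, `α̃_x`, `α_λ` appearing in the
one-iteration progress analysis, for the stepsizes `η_x = (1−ρ)²/(5L√(1+6κ²))` and
`η_λ = (1−ρ)²/(L(9κ+2))`, with `κ = L/μ ≥ 1`, `ρ ∈ [0,1)`, `m ≥ 1`. -/
theorem dgdmax_stepsize_alpha_bounds
    (L μ ρ : ℝ) (m : ℕ) (hL : 0 < L) (hμ : 0 < μ)
    (hκ : 1 ≤ L / μ) (hρ0 : 0 ≤ ρ) (hρ1 : ρ < 1) (hm : 1 ≤ m) :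
    let κ : ℝ := L / μ
    let ηx : ℝ := (1 - ρ) ^ 2 / (5 * L * Real.sqrt (1 + 6 * κ ^ 2))
    let ηlam : ℝ := (1 - ρ) ^ 2 / (L * (9 * κ + 2))
    let LP : ℝ := L * Real.sqrt (4 * κ ^ 2 + 1)
    let c : ℝ :=
      (ρ ^ 2 / (2 * (m : ℝ) * ηx) + L * (4 * κ + 1) / (2 * (m : ℝ))
          + 4 * L ^ 2 * (1 + 6 * κ ^ 2) / ((m : ℝ) * LP * (1 - ρ) ^ 2))
        / (1 - ρ - 8 * ηx ^ 2 * L ^ 2 * (1 + 6 * κ ^ 2) / (1 - ρ) ^ 3)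
    let αx : ℝ := (1 / (2 * (m : ℝ))) * (1 / ηx - 2 * LP - L * (κ + 1))
    let αxt : ℝ := 1 / (2 * (m : ℝ) * ηx) - L ^ 2 * (1 + 6 * κ ^ 2) / ((m : ℝ) * LP * (1 - ρ) ^ 2)
        - 2 * c * L ^ 2 * (1 + 6 * κ ^ 2) * ηx ^ 2 / (1 - ρ) ^ 3
    let αlam : ℝ := (1 / ηlam - L * κ / 2 - LP / 2) - 3 * L ^ 2 * κ ^ 2 / (LP * (1 - ρ) ^ 2)
        - 6 * c * (m : ℝ) * L ^ 2 * κ ^ 2 * ηx ^ 2 / (1 - ρ) ^ 3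
    αx ≥ L * (4 * κ + 1) / (2 * (m : ℝ) * (1 - ρ) ^ 2) ∧
    αxt ≥ 3 * L * (1 + 4 * κ) / (25 * (m : ℝ) * (1 - ρ) ^ 2) ∧
    αlam ≥ L * (4 * κ + 1) / (1 - ρ) ^ 2 := by
  intro κ ηx ηlam LP c αx αxt αlam
  have hκ1 : 1 ≤ κ := hκ
  simp only [αx, αxt, αlam, c, ηx, ηlam, LP]
  set s : ℝ := Real.sqrt (1 + 6 * κ ^ 2) with hs_def
  set t : ℝ := Real.sqrt (4 * κ ^ 2 + 1) with ht_def
  have hs2 : s ^ 2 = 1 + 6 * κ ^ 2 := Real.sq_sqrt (by positivity)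
  have ht2 : t ^ 2 = 4 * κ ^ 2 + 1 := Real.sq_sqrt (by positivity)
  have hs : 0 < s := Real.sqrt_pos.mpr (by positivity)
  have ht : 0 < t := Real.sqrt_pos.mpr (by positivity)
  have hD : 0 < 1 - ρ := by linarith
  have hD1 : (1 - ρ) ^ 2 ≤ 1 := by nlinarith
  have hρ2 : ρ ^ 2 ≤ 1 := by nlinarith
  have hM : (1:ℝ) ≤ (m:ℝ) := by exact_mod_cast hm
  have hMpos : (0:ℝ) < (m:ℝ) := by linarith
  -- basic comparison facts
  have hts : t ≤ s := by nlinarith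
  have h3s : 5 * κ + 2 ≤ 3 * s := by nlinarith [Real.sqrt_nonneg (1 + 6 * κ ^ 2)]
  have h2κ : 2 * κ ≤ t := by nlinarith
  have hst_lb : (489/100) * κ ^ 2 + (9/10) ≤ s * t := by
    have h : s * t = Real.sqrt ((1 + 6 * κ ^ 2) * (4 * κ ^ 2 + 1)) := by
      rw [hs_def, ht_def, ← Real.sqrt_mul (by positivity)]
    rw [h, Real.le_sqrt (by positivity) (by positivity)]
    nlinarith [sq_nonneg κ, sq_nonneg (κ^2)]
  have hst_ub : s * t ≤ (49/10) * κ ^ 2 + (103/100) := by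
    have h : s * t = Real.sqrt ((1 + 6 * κ ^ 2) * (4 * κ ^ 2 + 1)) := by
      rw [hs_def, ht_def, ← Real.sqrt_mul (by positivity)]
    rw [h]
    rw [show ((49/10) * κ ^ 2 + (103/100) : ℝ) = Real.sqrt (((49/10) * κ ^ 2 + (103/100))^2) from
      (Real.sqrt_sq (by positivity)).symm]
    apply Real.sqrt_le_sqrt
    nlinarith [sq_nonneg κ, sq_nonneg (κ^2)]
  have htu : t ≤ 2 * κ + 1 / 4 := by
    rw [ht_def, show (2 * κ + 1/4 : ℝ) = Real.sqrt ((2 * κ + 1/4)^2) from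
      (Real.sqrt_sq (by positivity)).symm]
    apply Real.sqrt_le_sqrt
    nlinarith
  -- the denominator of c simplifies
  have hden : 1 - ρ - 8 * ((1 - ρ) ^ 2 / (5 * L * s)) ^ 2 * L ^ 2 * (1 + 6 * κ ^ 2) / (1 - ρ) ^ 3
      = 17 * (1 - ρ) / 25 := by
    rw [← hs2]
    field_simp
    ring
  rw [hden]
  -- closed form for c
  have hc : (ρ ^ 2 / (2 * (m : ℝ) * ((1 - ρ) ^ 2 / (5 * L * s))) + L * (4 * κ + 1) / (2 * (m : ℝ))
          + 4 * L ^ 2 * (1 + 6 * κ ^ 2) / ((m : ℝ) * (L * t) * (1 - ρ) ^ 2))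
        / (17 * (1 - ρ) / 25)
      = 25 * L * (5 * ρ ^ 2 * s * t + (4 * κ + 1) * (1 - ρ) ^ 2 * t + 8 * s ^ 2)
          / (34 * (m : ℝ) * (1 - ρ) ^ 3 * t) := by
    rw [← hs2]
    field_simp
    ring
  rw [hc]
  refine ⟨?_, ?_, ?_⟩
  · -- αx bound
    have hE : (1 / (2 * (m : ℝ))) * (1 / ((1 - ρ) ^ 2 / (5 * L * s)) - 2 * (L * t) - L * (κ + 1))
        = L * (5 * s - 2 * t * (1 - ρ) ^ 2 - (κ + 1) * (1 - ρ) ^ 2) / (2 * (m : ℝ) * (1 - ρ) ^ 2) := by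
      field_simp
    rw [hE, ge_iff_le, div_le_div_iff₀ (by positivity) (by positivity)]
    have g1 : 0 ≤ t * (1 - (1 - ρ) ^ 2) := mul_nonneg ht.le (by linarith)
    have g2 : 0 ≤ (κ + 1) * (1 - (1 - ρ) ^ 2) := mul_nonneg (by linarith) (by linarith)
    have hcore : 4 * κ + 1 ≤ 5 * s - 2 * t * (1 - ρ) ^ 2 - (κ + 1) * (1 - ρ) ^ 2 := by
      linarith only [hts, g1, g2, h3s]
    have hmul := mul_le_mul_of_nonneg_left hcore
      (by positivity : (0:ℝ) ≤ L * (2 * (m : ℝ) * (1 - ρ) ^ 2))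
    linarith only [hmul]
  · -- αxt bound
    have hE : 1 / (2 * (m : ℝ) * ((1 - ρ) ^ 2 / (5 * L * s)))
        - L ^ 2 * (1 + 6 * κ ^ 2) / ((m : ℝ) * (L * t) * (1 - ρ) ^ 2)
        - 2 * (25 * L * (5 * ρ ^ 2 * s * t + (4 * κ + 1) * (1 - ρ) ^ 2 * t + 8 * s ^ 2)
            / (34 * (m : ℝ) * (1 - ρ) ^ 3 * t)) * L ^ 2 * (1 + 6 * κ ^ 2)
            * ((1 - ρ) ^ 2 / (5 * L * s)) ^ 2 / (1 - ρ) ^ 3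
        = L * (85 * s * t - 50 * s ^ 2 - 10 * ρ ^ 2 * s * t - 2 * (4 * κ + 1) * (1 - ρ) ^ 2 * t)
            / (34 * (m : ℝ) * (1 - ρ) ^ 2 * t) := by
      rw [← hs2]
      field_simp
      ring
    rw [hE, ge_iff_le, div_le_div_iff₀ (by positivity) (by positivity)]
    have g1 : 0 ≤ (1 - ρ ^ 2) * (s * t) := mul_nonneg (by linarith) (by positivity)
    have g2 : 0 ≤ (4 * κ + 1) * (1 - (1 - ρ) ^ 2) * t :=
      mul_nonneg (mul_nonneg (by linarith) (by linarith)) ht.le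
    have hC := mul_le_mul_of_nonneg_left htu (by linarith : (0:ℝ) ≤ 608 * κ + 152)
    have hP2 : 1875 * (s * t) - 1250 * s ^ 2 - 152 * (4 * κ + 1) * t ≥ 0 := by
      linarith only [hst_lb, hs2, hC, sq_nonneg (κ - 1), hκ1]
    have hcore : 102 * (1 + 4 * κ) * t ≤
        25 * (85 * s * t - 50 * s ^ 2 - 10 * ρ ^ 2 * s * t - 2 * (4 * κ + 1) * (1 - ρ) ^ 2 * t) := by
      linarith only [g1, g2, hP2]
    have hmul := mul_le_mul_of_nonneg_left hcore
      (by positivity : (0:ℝ) ≤ L * ((m : ℝ) * (1 - ρ) ^ 2))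
    linarith only [hmul]
  · -- αlam bound
    have hE : (1 / ((1 - ρ) ^ 2 / (L * (9 * κ + 2))) - L * κ / 2 - L * t / 2)
        - 3 * L ^ 2 * κ ^ 2 / (L * t * (1 - ρ) ^ 2)
        - 6 * (25 * L * (5 * ρ ^ 2 * s * t + (4 * κ + 1) * (1 - ρ) ^ 2 * t + 8 * s ^ 2)
            / (34 * (m : ℝ) * (1 - ρ) ^ 3 * t)) * (m : ℝ) * L ^ 2 * κ ^ 2
            * ((1 - ρ) ^ 2 / (5 * L * s)) ^ 2 / (1 - ρ) ^ 3
        = L * (34 * s ^ 2 * t * (9 * κ + 2) - 17 * κ * s ^ 2 * t * (1 - ρ) ^ 2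
            - 17 * s ^ 2 * t ^ 2 * (1 - ρ) ^ 2 - 102 * κ ^ 2 * s ^ 2
            - 30 * κ ^ 2 * ρ ^ 2 * s * t - 6 * κ ^ 2 * (4 * κ + 1) * (1 - ρ) ^ 2 * t
            - 48 * κ ^ 2 * s ^ 2)
            / (34 * s ^ 2 * t * (1 - ρ) ^ 2) := by
      field_simp
      ring
    rw [hE, ge_iff_le, div_le_div_iff₀ (by positivity) (by positivity)]
    have g1 : 0 ≤ 17 * κ * s ^ 2 * t * (1 - (1 - ρ) ^ 2) := by
      apply mul_nonneg _ (by linarith); positivity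
    have g2 : 0 ≤ 17 * s ^ 2 * t ^ 2 * (1 - (1 - ρ) ^ 2) := by
      apply mul_nonneg _ (by linarith); positivity
    have g3 : 0 ≤ 30 * κ ^ 2 * (1 - ρ ^ 2) * (s * t) := by
      apply mul_nonneg (mul_nonneg (by positivity) (by linarith)) (by positivity)
    have g4 : 0 ≤ 6 * κ ^ 2 * (4 * κ + 1) * (1 - (1 - ρ) ^ 2) * t := by
      have h41 : 0 ≤ 6 * κ ^ 2 * (4 * κ + 1) := by nlinarith [sq_nonneg κ, hκ1]
      exact mul_nonneg (mul_nonneg h41 (by linarith)) ht.le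
    have k2 : 1 ≤ κ ^ 2 := by nlinarith [hκ1]
    have k24 : κ ^ 2 ≤ κ ^ 4 := by nlinarith [mul_nonneg (sq_nonneg κ) (sub_nonneg.2 k2)]
    have k3 : 1 ≤ κ ^ 3 := by nlinarith [hκ1, k2]
    have hpoly : 0 ≤ 333*κ^4 + 396*κ^3 - (449/10)*κ^2 + 68*κ - 17 := by
      linarith [k24, k3, hκ1, k2]
    have A : 30*κ^2*(s*t) ≤ 30*κ^2*((49/10)*κ^2 + 103/100) :=
      mul_le_mul_of_nonneg_left hst_ub (by positivity)
    have B : (894*κ^3 + 198*κ^2 + 153*κ + 34) * (2*κ)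
        ≤ (894*κ^3 + 198*κ^2 + 153*κ + 34) * t :=
      mul_le_mul_of_nonneg_left h2κ (by positivity)
    have e3 : s^2*t^2 = (1 + 6*κ^2) * (4*κ^2 + 1) := by rw [hs2, ht2]
    have e4 : s^2*t = (1 + 6*κ^2) * t := by rw [hs2]
    have e4k : κ*(s^2*t) = κ*((1 + 6*κ^2) * t) := by rw [hs2]
    have e5 : κ^2*s^2 = κ^2*(1 + 6*κ^2) := by rw [hs2]
    have hP3 : (153 * κ + 34) * s ^ 2 * t ≥
        17 * s ^ 2 * t ^ 2 + 150 * κ ^ 2 * s ^ 2 + 30 * κ ^ 2 * (s * t)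
          + 6 * κ ^ 2 * (4 * κ + 1) * t := by
      linarith only [hpoly, A, B, e3, e4, e4k, e5]
    have hcore : 34 * (4 * κ + 1) * (s ^ 2 * t) ≤
        34 * s ^ 2 * t * (9 * κ + 2) - 17 * κ * s ^ 2 * t * (1 - ρ) ^ 2
          - 17 * s ^ 2 * t ^ 2 * (1 - ρ) ^ 2 - 102 * κ ^ 2 * s ^ 2
          - 30 * κ ^ 2 * ρ ^ 2 * s * t - 6 * κ ^ 2 * (4 * κ + 1) * (1 - ρ) ^ 2 * t
          - 48 * κ ^ 2 * s ^ 2 := by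
      linarith only [g1, g2, g3, g4, hP3]
    have hmul := mul_le_mul_of_nonneg_left hcore
      (by positivity : (0:ℝ) ≤ L * (1 - ρ) ^ 2)
    linarith only [hmul]
end

section
/- Let L > 0, μ > 0 with κ = L/μ ≥ 1, let ρ ∈ [0, 1), let m ≥ 1 be an integer. Define η_x = (1−ρ)²/(5L√(1+6κ²)), L_P = L√(4κ²+1), and c = (ρ²/(2mη_x) + L(4κ+1)/(2m) + 4L²(1+6κ²)/(mL_P(1−ρ)²)) / (1 − ρ − 8η_x²L²(1+6κ²)/(1−ρ)³). Then 3κ²/(2L_P(1−ρ)²) + 3cmη_x²κ²/(1−ρ)³ ≤ 3κ/(2L(1−ρ)²), and 1/(2mL_P(1−ρ)) + cη_x²/(1−ρ)² ≤ 1/(2mLκ(1−ρ)). -/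
set_option maxHeartbeats 1000000

/-- Key scalar inequality: for `κ ≥ 1`, `s² = 1+6κ²`, `t² = 4κ²+1`, and `a,b ∈ [0,1]`,
`κ/t + (κ/17)(5a/s + (4κ+1)b/s² + 8/t) ≤ 1`. -/
lemma dgdmax_key_ineq (κ s t a b : ℝ) (hκ : 1 ≤ κ) (hs : 0 < s) (ht : 0 < t)
    (hs2 : s ^ 2 = 1 + 6 * κ ^ 2) (ht2 : t ^ 2 = 4 * κ ^ 2 + 1)
    (ha0 : 0 ≤ a) (ha1 : a ≤ 1) (hb0 : 0 ≤ b) (hb1 : b ≤ 1) :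
    κ / t + κ / 17 * (5 * a / s + (4 * κ + 1) * b / s ^ 2 + 8 / t) ≤ 1 := by
  have hκ0 : 0 < κ := lt_of_lt_of_le one_pos hκ
  have h2t : 2 * κ ≤ t := by nlinarith
  have h2s : 2 * κ ≤ s := by nlinarith
  have e1 : κ / t ≤ 1 / 2 := by rw [div_le_iff₀ ht]; nlinarith
  have p1 : κ * (5 * a / s) ≤ 5 / 2 := by
    rw [show κ * (5 * a / s) = 5 * a * κ / s by ring, div_le_iff₀ hs]; nlinarith
  have p2 : κ * ((4 * κ + 1) * b / s ^ 2) ≤ 5 / 6 := by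
    rw [show κ * ((4 * κ + 1) * b / s ^ 2) = (4 * κ + 1) * b * κ / s ^ 2 by ring,
      div_le_iff₀ (by positivity : (0:ℝ) < s ^ 2)]
    nlinarith [mul_nonneg (show (0:ℝ) ≤ 4 * κ ^ 2 + κ by nlinarith)
      (show (0:ℝ) ≤ 1 - b by linarith)]
  have p3 : κ * (8 / t) ≤ 4 := by
    rw [show κ * (8 / t) = 8 * κ / t by ring, div_le_iff₀ ht]; nlinarith
  have expand : κ / 17 * (5 * a / s + (4 * κ + 1) * b / s ^ 2 + 8 / t)
      = (κ * (5 * a / s) + κ * ((4 * κ + 1) * b / s ^ 2) + κ * (8 / t)) / 17 := by ring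
  rw [expand]
  linarith

/-- Upper bounds on the error-accumulation coefficients in the
consensus-error analysis, for `η_x = (1−ρ)²/(5L√(1+6κ²))`, `L_P = L√(4κ²+1)` and the
constant `c`, with `κ = L/μ ≥ 1`, `ρ ∈ [0,1)`, `m ≥ 1`. -/
theorem dgdmax_stepsize_error_coeff_bounds
    (L μ ρ : ℝ) (m : ℕ) (hL : 0 < L) (hμ : 0 < μ)
    (hκ : 1 ≤ L / μ) (hρ0 : 0 ≤ ρ) (hρ1 : ρ < 1) (hm : 1 ≤ m) :
    let κ : ℝ := L / μ
    let ηx : ℝ := (1 - ρ) ^ 2 / (5 * L * Real.sqrt (1 + 6 * κ ^ 2))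
    let LP : ℝ := L * Real.sqrt (4 * κ ^ 2 + 1)
    let c : ℝ :=
      (ρ ^ 2 / (2 * (m : ℝ) * ηx) + L * (4 * κ + 1) / (2 * (m : ℝ))
          + 4 * L ^ 2 * (1 + 6 * κ ^ 2) / ((m : ℝ) * LP * (1 - ρ) ^ 2))
        / (1 - ρ - 8 * ηx ^ 2 * L ^ 2 * (1 + 6 * κ ^ 2) / (1 - ρ) ^ 3)
    (3 * κ ^ 2 / (2 * LP * (1 - ρ) ^ 2) + 3 * c * (m : ℝ) * ηx ^ 2 * κ ^ 2 / (1 - ρ) ^ 3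
        ≤ 3 * κ / (2 * L * (1 - ρ) ^ 2)) ∧
    (1 / (2 * (m : ℝ) * LP * (1 - ρ)) + c * ηx ^ 2 / (1 - ρ) ^ 2
        ≤ 1 / (2 * (m : ℝ) * L * κ * (1 - ρ))) := by
  intro κ ηx LP c
  have hκ1 : 1 ≤ κ := hκ
  have hκ0 : 0 < κ := lt_of_lt_of_le one_pos hκ1
  have hr : 0 < 1 - ρ := by linarith
  have hm1 : (1:ℝ) ≤ (m:ℝ) := by exact_mod_cast hm
  have hm0 : (0:ℝ) < (m:ℝ) := by linarith
  set s : ℝ := Real.sqrt (1 + 6 * κ ^ 2) with hs_def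
  set t : ℝ := Real.sqrt (4 * κ ^ 2 + 1) with ht_def
  have hs2 : s ^ 2 = 1 + 6 * κ ^ 2 := Real.sq_sqrt (by positivity)
  have ht2 : t ^ 2 = 4 * κ ^ 2 + 1 := Real.sq_sqrt (by positivity)
  have hs : 0 < s := Real.sqrt_pos.mpr (by positivity)
  have ht : 0 < t := Real.sqrt_pos.mpr (by positivity)
  have hηx : ηx = (1 - ρ) ^ 2 / (5 * L * s) := rfl
  have hLP : LP = L * t := rfl
  have hD : 1 - ρ - 8 * ηx ^ 2 * L ^ 2 * (1 + 6 * κ ^ 2) / (1 - ρ) ^ 3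
      = 17 / 25 * (1 - ρ) := by
    rw [hηx, show (1:ℝ) + 6 * κ ^ 2 = s ^ 2 from hs2.symm]
    field_simp
    ring
  have hc : c = (ρ ^ 2 / (2 * (m : ℝ) * ηx) + L * (4 * κ + 1) / (2 * (m : ℝ))
          + 4 * L ^ 2 * (1 + 6 * κ ^ 2) / ((m : ℝ) * LP * (1 - ρ) ^ 2))
        / (17 / 25 * (1 - ρ)) := by
    show (ρ ^ 2 / (2 * (m : ℝ) * ηx) + L * (4 * κ + 1) / (2 * (m : ℝ))
          + 4 * L ^ 2 * (1 + 6 * κ ^ 2) / ((m : ℝ) * LP * (1 - ρ) ^ 2))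
        / (1 - ρ - 8 * ηx ^ 2 * L ^ 2 * (1 + 6 * κ ^ 2) / (1 - ρ) ^ 3) = _
    rw [hD]
  clear_value c
  clear_value ηx LP
  have hK : κ / t + κ / 17 * (5 * ρ ^ 2 / s + (4 * κ + 1) * (1 - ρ) ^ 2 / s ^ 2 + 8 / t)
      ≤ 1 :=
    dgdmax_key_ineq κ s t (ρ ^ 2) ((1 - ρ) ^ 2) hκ1 hs ht hs2 ht2 (by positivity)
      (by nlinarith) (by positivity) (by nlinarith)
  constructor
  · have eq1 : 3 * κ ^ 2 / (2 * LP * (1 - ρ) ^ 2)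
        + 3 * c * (m : ℝ) * ηx ^ 2 * κ ^ 2 / (1 - ρ) ^ 3
        = (3 * κ / (2 * L * (1 - ρ) ^ 2)) *
          (κ / t + κ / 17 * (5 * ρ ^ 2 / s + (4 * κ + 1) * (1 - ρ) ^ 2 / s ^ 2 + 8 / t)) := by
      rw [hc, hηx, hLP, show (1:ℝ) + 6 * κ ^ 2 = s ^ 2 from hs2.symm]
      field_simp
      ring
    rw [eq1]
    calc (3 * κ / (2 * L * (1 - ρ) ^ 2)) *
          (κ / t + κ / 17 * (5 * ρ ^ 2 / s + (4 * κ + 1) * (1 - ρ) ^ 2 / s ^ 2 + 8 / t))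
        ≤ (3 * κ / (2 * L * (1 - ρ) ^ 2)) * 1 :=
          mul_le_mul_of_nonneg_left hK (by positivity)
      _ = 3 * κ / (2 * L * (1 - ρ) ^ 2) := mul_one _
  · have eq2 : 1 / (2 * (m : ℝ) * LP * (1 - ρ)) + c * ηx ^ 2 / (1 - ρ) ^ 2
        = (1 / (2 * (m : ℝ) * L * κ * (1 - ρ))) *
          (κ / t + κ / 17 * (5 * ρ ^ 2 / s + (4 * κ + 1) * (1 - ρ) ^ 2 / s ^ 2 + 8 / t)) := by
      rw [hc, hηx, hLP, show (1:ℝ) + 6 * κ ^ 2 = s ^ 2 from hs2.symm]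
      field_simp
      ring
    rw [eq2]
    calc (1 / (2 * (m : ℝ) * L * κ * (1 - ρ))) *
          (κ / t + κ / 17 * (5 * ρ ^ 2 / s + (4 * κ + 1) * (1 - ρ) ^ 2 / s ^ 2 + 8 / t))
        ≤ (1 / (2 * (m : ℝ) * L * κ * (1 - ρ))) * 1 :=
          mul_le_mul_of_nonneg_left hK (by positivity)
      _ = 1 / (2 * (m : ℝ) * L * κ * (1 - ρ)) := mul_one _
end

section
/- Let m, n₁, n₂ be positive integers, L > 0, and ρ ∈ (0, 1). Let W = (w_{ij}) ∈ ℝ^{m×m} satisfy Σ_{j=1}^m w_{ij} = 1 for every i, Σ_{i=1}^m w_{ij} = 1 for every j, and ‖(W − (1/m)𝟏𝟏ᵀ)v‖ ≤ ρ‖v‖ for every v ∈ ℝ^m. For each i ∈ {1,…,m}, let f_i : ℝ^{n₁} × ℝ^{n₂} → ℝ be differentiable with L-Lipschitz gradient. Let (x_i, y_i, v_i)_{i=1}^m and (x'_i, y'_i, v'_i)_{i=1}^m be tuples with x_i, x'_i, v_i, v'_i ∈ ℝ^{n₁} and y_i, y'_i ∈ ℝ^{n₂} related by the gradient-tracking update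 v'_i = Σ_{j=1}^m w_{ij} v_j + ∇_x f_i(x'_i, y'_i) − ∇_x f_i(x_i, y_i) for each i. Write v̄ = (1/m)Σ_i v_i and v̄' = (1/m)Σ_i v'_i. Then Σ_{i=1}^m ‖v'_i − v̄'‖² ≤ ρ Σ_{i=1}^m ‖v_i − v̄‖² + (L²/(1−ρ)) (Σ_{i=1}^m ‖x'_i − x_i‖² + Σ_{i=1}^m ‖y'_i − y_i‖²). -/
open scoped BigOperators RealInnerProductSpace

/-!
Since `W` is row stochastic, `v'_i − v̄ = Σ_j (w_ij − 1/m)(v_j − v̄) + g_i` with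
`g_i = ∇_x f_i(x'_i, y'_i) − ∇_x f_i(x_i, y_i)`. The mean `v̄'` minimises `Σ_i ‖v'_i − c‖²` over `c`,
so the consensus error of `v'` is at most `Σ_i ‖v'_i − v̄‖²`. Young's inequality with weights
`ρ, 1 − ρ` splits this into `ρ⁻¹ Σ_i ‖Σ_j (w_ij − 1/m)(v_j − v̄)‖² + (1 − ρ)⁻¹ Σ_i ‖g_i‖²`; the
first sum is at most `ρ² Σ_j ‖v_j − v̄‖²` by the spectral bound applied coordinatewise, and the
second at most `L²(‖X' − X‖² + ‖Y' − Y‖²)` by smoothness.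
-/

open Finset

section Mean

variable {ι E : Type*} [Fintype ι] [NormedAddCommGroup E] [InnerProductSpace ℝ E]

lemma sum_eq_card_smul_mean (p : ι → E) :
    ∑ i, p i = (Fintype.card ι : ℝ) • (1 / (Fintype.card ι : ℝ)) • ∑ i, p i := by
  rcases (Fintype.card ι).eq_zero_or_pos with hι | hι
  · simp [Fintype.card_eq_zero_iff.mp hι]
  · rw [smul_smul, mul_one_div_cancel (by positivity), one_smul]

lemma sum_norm_sub_sq_eq_sum_norm_sub_mean_sq_add (p : ι → E) (c : E) :
    ∑ i, ‖p i - c‖ ^ 2 = ∑ i, ‖p i - (1 / (Fintype.card ι : ℝ)) • ∑ k, p k‖ ^ 2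
      + Fintype.card ι * ‖(1 / (Fintype.card ι : ℝ)) • ∑ k, p k - c‖ ^ 2 := by
  set μ := (1 / (Fintype.card ι : ℝ)) • ∑ k, p k
  have hdev : ∑ i, (p i - μ) = 0 := by
    rw [sum_sub_distrib, sum_const, card_univ, ← Nat.cast_smul_eq_nsmul ℝ,
      ← sum_eq_card_smul_mean, sub_self]
  have hsplit : ∀ i, ‖p i - c‖ ^ 2 = ‖p i - μ‖ ^ 2 + 2 * ⟪p i - μ, μ - c⟫ + ‖μ - c‖ ^ 2 := by
    intro i
    rw [← norm_add_sq_real, sub_add_sub_cancel]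
  simp only [hsplit, sum_add_distrib, ← mul_sum, ← sum_inner, hdev, inner_zero_left, mul_zero,
    add_zero, sum_const, card_univ, nsmul_eq_mul]

lemma sum_norm_sub_mean_sq_le (p : ι → E) (c : E) :
    ∑ i, ‖p i - (1 / (Fintype.card ι : ℝ)) • ∑ k, p k‖ ^ 2 ≤ ∑ i, ‖p i - c‖ ^ 2 := by
  rw [sum_norm_sub_sq_eq_sum_norm_sub_mean_sq_add p c]
  exact le_add_of_nonneg_right (by positivity)

end Mean

lemma norm_add_sq_le_div_add_div {E : Type*} [SeminormedAddCommGroup E] {t : ℝ}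
    (ht₀ : 0 < t) (ht₁ : t < 1) (a b : E) :
    ‖a + b‖ ^ 2 ≤ ‖a‖ ^ 2 / t + ‖b‖ ^ 2 / (1 - t) := by
  have ht : 0 < 1 - t := sub_pos.mpr ht₁
  -- `A²/t + B²/(1-t) - (A+B)² = ((1-t)A - tB)² / (t(1-t))`
  have hyoung : (‖a‖ + ‖b‖) ^ 2 ≤ ‖a‖ ^ 2 / t + ‖b‖ ^ 2 / (1 - t) := by
    rw [div_add_div _ _ ht₀.ne' ht.ne', le_div_iff₀ (by positivity)]
    nlinarith [sq_nonneg ((1 - t) * ‖a‖ - t * ‖b‖)]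
  calc ‖a + b‖ ^ 2 ≤ (‖a‖ + ‖b‖) ^ 2 := by gcongr; exact norm_add_le a b
    _ ≤ _ := hyoung

lemma sum_norm_add_sq_le_div_add_div {ι E : Type*} [Fintype ι] [SeminormedAddCommGroup E]
    {t : ℝ} (ht₀ : 0 < t) (ht₁ : t < 1) (a b : ι → E) :
    ∑ i, ‖a i + b i‖ ^ 2 ≤ (∑ i, ‖a i‖ ^ 2) / t + (∑ i, ‖b i‖ ^ 2) / (1 - t) := by
  rw [sum_div, sum_div, ← sum_add_distrib]
  exact sum_le_sum fun i _ => norm_add_sq_le_div_add_div ht₀ ht₁ (a i) (b i)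

lemma sum_norm_sum_smul_sq_le {ι κ η : Type*} [Fintype ι] [Fintype κ] [Fintype η]
    (A : ι → κ → ℝ) {C : ℝ}
    (hA : ∀ v : κ → ℝ, ∑ i, (∑ j, A i j * v j) ^ 2 ≤ C * ∑ j, v j ^ 2)
    (u : κ → EuclideanSpace ℝ η) :
    ∑ i, ‖∑ j, A i j • u j‖ ^ 2 ≤ C * ∑ j, ‖u j‖ ^ 2 := by
  simp only [EuclideanSpace.real_norm_sq_eq, WithLp.ofLp_sum, WithLp.ofLp_smul, Finset.sum_apply,
    Pi.smul_apply, smul_eq_mul]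
  rw [sum_comm, sum_comm (γ := κ), mul_sum]
  exact sum_le_sum fun t _ => hA fun j => u j t

lemma sum_smul_sub_mean_eq {ι E : Type*} [Fintype ι] [AddCommGroup E] [Module ℝ E]
    (w : ι → ι → ℝ) {i : ι} (hrow : ∑ j, w i j = 1) (v : ι → E) :
    ∑ j, w i j • v j - (1 / (Fintype.card ι : ℝ)) • ∑ k, v k
      = ∑ j, (w i j - 1 / (Fintype.card ι : ℝ)) • (v j - (1 / (Fintype.card ι : ℝ)) • ∑ k, v k) := by
  have : Nonempty ι := ⟨i⟩
  have hcentered : ∑ j, (w i j - 1 / (Fintype.card ι : ℝ)) = 0 := by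
    simp [sum_sub_distrib, hrow]
  set μ := (1 / (Fintype.card ι : ℝ)) • ∑ k, v k
  calc ∑ j, w i j • v j - μ = ∑ j, (w i j - 1 / (Fintype.card ι : ℝ)) • v j := by
        simp only [μ, sub_smul, sum_sub_distrib, smul_sum]
    _ = ∑ j, (w i j - 1 / (Fintype.card ι : ℝ)) • v j
          - (∑ j, (w i j - 1 / (Fintype.card ι : ℝ))) • μ := by
        rw [hcentered, zero_smul, sub_zero]
    _ = _ := by rw [sum_smul, ← sum_sub_distrib]; simp only [smul_sub]

theorem dgdmax_tracking_consensus_contraction_general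
    {m n₁ n₂ : ℕ}
    (L ρ : ℝ) (hρ0 : 0 < ρ) (hρ1 : ρ < 1)
    (w : Fin m → Fin m → ℝ)
    (hrow : ∀ i, ∑ j, w i j = 1)
    (hcontr : ∀ v : Fin m → ℝ,
      ∑ i, (∑ j, (w i j - 1 / (m : ℝ)) * v j) ^ 2 ≤ ρ ^ 2 * ∑ j, (v j) ^ 2)
    (Gx : Fin m → EuclideanSpace ℝ (Fin n₁) → EuclideanSpace ℝ (Fin n₂) →
      EuclideanSpace ℝ (Fin n₁))
    (Gy : Fin m → EuclideanSpace ℝ (Fin n₁) → EuclideanSpace ℝ (Fin n₂) →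
      EuclideanSpace ℝ (Fin n₂))
    (hLip : ∀ i x y x' y',
      ‖Gx i x y - Gx i x' y'‖ ^ 2 + ‖Gy i x y - Gy i x' y'‖ ^ 2
        ≤ L ^ 2 * (‖x - x'‖ ^ 2 + ‖y - y'‖ ^ 2))
    (x x' v v' : Fin m → EuclideanSpace ℝ (Fin n₁))
    (y y' : Fin m → EuclideanSpace ℝ (Fin n₂))
    (hupd : ∀ i, v' i = (∑ j, w i j • v j) + Gx i (x' i) (y' i) - Gx i (x i) (y i)) :
    ∑ i, ‖v' i - (1 / (m : ℝ)) • ∑ k, v' k‖ ^ 2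
      ≤ ρ * ∑ i, ‖v i - (1 / (m : ℝ)) • ∑ k, v k‖ ^ 2
        + (L ^ 2 / (1 - ρ)) * (∑ i, ‖x' i - x i‖ ^ 2 + ∑ i, ‖y' i - y i‖ ^ 2) := by
  set μ := (1 / (m : ℝ)) • ∑ k, v k
  set a := fun i => ∑ j, (w i j - 1 / (m : ℝ)) • (v j - μ)
  set g := fun i => Gx i (x' i) (y' i) - Gx i (x i) (y i)
  have hdev : ∀ i, v' i - μ = a i + g i := fun i => by
    have ha : a i = ∑ j, w i j • v j - μ := by
      simpa only [Fintype.card_fin] using (sum_smul_sub_mean_eq w (hrow i) v).symm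
    rw [hupd i, ha]
    simp only [g]
    abel
  have ha : ∑ i, ‖a i‖ ^ 2 ≤ ρ ^ 2 * ∑ i, ‖v i - μ‖ ^ 2 :=
    sum_norm_sum_smul_sq_le _ hcontr _
  have hg : ∑ i, ‖g i‖ ^ 2 ≤ L ^ 2 * (∑ i, ‖x' i - x i‖ ^ 2 + ∑ i, ‖y' i - y i‖ ^ 2) := by
    rw [← sum_add_distrib, mul_sum]
    exact sum_le_sum fun i _ =>
      (le_add_of_nonneg_right (sq_nonneg _)).trans (hLip i (x' i) (y' i) (x i) (y i))
  have hmean := sum_norm_sub_mean_sq_le v' μ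
  rw [Fintype.card_fin] at hmean
  calc ∑ i, ‖v' i - (1 / (m : ℝ)) • ∑ k, v' k‖ ^ 2
      ≤ ∑ i, ‖a i + g i‖ ^ 2 := by simpa only [hdev] using hmean
    _ ≤ (∑ i, ‖a i‖ ^ 2) / ρ + (∑ i, ‖g i‖ ^ 2) / (1 - ρ) :=
      sum_norm_add_sq_le_div_add_div hρ0 hρ1 a g
    _ ≤ ρ ^ 2 * (∑ i, ‖v i - μ‖ ^ 2) / ρ
          + L ^ 2 * (∑ i, ‖x' i - x i‖ ^ 2 + ∑ i, ‖y' i - y i‖ ^ 2) / (1 - ρ) := by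
      gcongr
    _ = _ := by field_simp

/-- One-step consensus-error contraction for the gradient-tracking
variables: for a doubly stochastic mixing matrix `W` with `‖W − (1/m)𝟏𝟏ᵀ‖₂ ≤ ρ < 1` and
`L`-smooth `f_i`, the gradient-tracking update
`v'_i = Σ_j w_{ij} v_j + ∇_x f_i(x'_i, y'_i) − ∇_x f_i(x_i, y_i)` satisfies
`‖V'_⊥‖² ≤ ρ‖V_⊥‖² + (L²/(1−ρ))(‖X' − X‖² + ‖Y' − Y‖²)`. -/
theorem dgdmax_tracking_consensus_contraction
    {m n₁ n₂ : ℕ} (hm : 0 < m) (hn₁ : 0 < n₁) (hn₂ : 0 < n₂)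
    (L ρ : ℝ) (hL : 0 < L) (hρ0 : 0 < ρ) (hρ1 : ρ < 1)
    (w : Fin m → Fin m → ℝ)
    (hrow : ∀ i, ∑ j, w i j = 1) (hcol : ∀ j, ∑ i, w i j = 1)
    (hcontr : ∀ v : Fin m → ℝ,
      ∑ i, (∑ j, (w i j - 1 / (m : ℝ)) * v j) ^ 2 ≤ ρ ^ 2 * ∑ j, (v j) ^ 2)
    (f : Fin m → EuclideanSpace ℝ (Fin n₁) → EuclideanSpace ℝ (Fin n₂) → ℝ)
    (Gx : Fin m → EuclideanSpace ℝ (Fin n₁) → EuclideanSpace ℝ (Fin n₂) →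
      EuclideanSpace ℝ (Fin n₁))
    (Gy : Fin m → EuclideanSpace ℝ (Fin n₁) → EuclideanSpace ℝ (Fin n₂) →
      EuclideanSpace ℝ (Fin n₂))
    (hGx : ∀ i x y, HasGradientAt (fun x' => f i x' y) (Gx i x y) x)
    (hGy : ∀ i x y, HasGradientAt (fun y' => f i x y') (Gy i x y) y)
    (hLip : ∀ i x y x' y',
      ‖Gx i x y - Gx i x' y'‖ ^ 2 + ‖Gy i x y - Gy i x' y'‖ ^ 2
        ≤ L ^ 2 * (‖x - x'‖ ^ 2 + ‖y - y'‖ ^ 2))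
    (x x' v v' : Fin m → EuclideanSpace ℝ (Fin n₁))
    (y y' : Fin m → EuclideanSpace ℝ (Fin n₂))
    (hupd : ∀ i, v' i = (∑ j, w i j • v j) + Gx i (x' i) (y' i) - Gx i (x i) (y i)) :
    ∑ i, ‖v' i - (1 / (m : ℝ)) • ∑ k, v' k‖ ^ 2
      ≤ ρ * ∑ i, ‖v i - (1 / (m : ℝ)) • ∑ k, v k‖ ^ 2
        + (L ^ 2 / (1 - ρ)) * (∑ i, ‖x' i - x i‖ ^ 2 + ∑ i, ‖y' i - y i‖ ^ 2) :=
  dgdmax_tracking_consensus_contraction_general L ρ hρ0 hρ1 w hrow hcontr Gx Gy hLip x x' v v' y y'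
    hupd
end

section
/- Let m, n₁, n₂ be positive integers, f_1,…,f_m : ℝ^{n₁} × ℝ^{n₂} → ℝ, h : ℝ^{n₂} → ℝ, L > 0, and W = (w_{ij}) ∈ ℝ^{m×m} with W𝟏 = 𝟏 and Null(W − I) = Span{𝟏} (i.e., Σ_j w_{ij} = 1 for each i, and (W−I)v = 0 iff v is a multiple of 𝟏). Fix x̄ ∈ ℝ^{n₁} and a multiplier tuple Λ̄ = (λ̄_1,…,λ̄_m) ∈ (ℝ^{n₂})^m. Suppose Ȳ = (ȳ_1,…,ȳ_m) ∈ (ℝ^{n₂})^m satisfies: (a) Φ((x̄,…,x̄), Λ̄, Ȳ) ≥ Φ((x̄,…,x̄), Λ̄, Y) for every Y ∈ (ℝ^{n₂})^m (Ȳ maximizes Φ((x̄,…,x̄), Λ̄, ·)); and (b) Σ_{j=1}^m (w_{ij} − δ_{ij}) ȳ_j = 0 for every i (i.e., (W−I)Ȳ = 0, equivalently the Λ-gradient of P(x̄, ·) vanishes at Λ̄). Then all the blocks of Ȳ coincide, ȳ_1 = ⋯ = ȳ_m =: ȳ, and ȳ maximizes the function y ↦ (1/m) Σ_{i=1}^m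 f_i(x̄, y) − h(y) over ℝ^{n₂}. -/
/-!
Since the kernel of `W - I` consists of the constant vectors, `(W - I)Ȳ = 0` forces all blocks of
`Ȳ` to agree. On consensus tuples `Y = (y, …, y)` the penalty term of `Φ` vanishes, so `Φ` reduces to
the original objective at `y`; maximality of `Ȳ` against these tuples is the claim.
-/

open scoped BigOperators RealInnerProductSpace

/-- The function `Φ(X, Λ, Y)` of the reformulated decentralized minimax problem. -/
noncomputable def Phi {m n₁ n₂ : ℕ} (L : ℝ)
    (f : Fin m → EuclideanSpace ℝ (Fin n₁) → EuclideanSpace ℝ (Fin n₂) → ℝ)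
    (h : EuclideanSpace ℝ (Fin n₂) → ℝ) (w : Fin m → Fin m → ℝ)
    (X : Fin m → EuclideanSpace ℝ (Fin n₁))
    (Λ Y : Fin m → EuclideanSpace ℝ (Fin n₂)) : ℝ :=
  (1 / (m : ℝ)) * ∑ i, (f i (X i) (Y i) - h (Y i))
    - (L / (2 * Real.sqrt (m : ℝ))) *
        ∑ i, ⟪Λ i, ∑ j, (w i j - if i = j then 1 else 0) • Y j⟫

theorem sum_smul_eq_zero_iff_exists_const {R E ι : Type*} [CommRing R] [AddCommGroup E]
    [Module R E] [Module.Projective R E] [Fintype ι] (a : ι → ι → R)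
    (hker : ∀ v : ι → R, (∀ i, ∑ j, a i j * v j = 0) ↔ ∃ c, ∀ i, v i = c) (Y : ι → E) :
    (∀ i, ∑ j, a i j • Y j = 0) ↔ ∃ z, ∀ i, Y i = z := by
  constructor
  · intro hY
    have hpair : ∀ i k, Y i = Y k := by
      intro i k
      -- linear functionals separate the points of a projective module
      rw [← sub_eq_zero, ← Module.forall_dual_apply_eq_zero_iff R]
      intro φ
      obtain ⟨c, hc⟩ := (hker fun j => φ (Y j)).mp fun i => by
        simpa only [map_sum, map_smul, smul_eq_mul, map_zero] using congrArg φ (hY i)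
      rw [map_sub]
      exact sub_eq_zero.mpr ((hc i).trans (hc k).symm)
    rcases isEmpty_or_nonempty ι with _ | ⟨⟨i₀⟩⟩
    · exact ⟨0, isEmptyElim⟩
    · exact ⟨Y i₀, fun i => hpair i i₀⟩
  · rintro ⟨z, hz⟩ i
    have hrow : ∑ j, a i j = 0 := by
      simpa only [mul_one] using (hker fun _ => 1).mpr ⟨1, fun _ => rfl⟩ i
    simp only [hz, ← Finset.sum_smul, hrow, zero_smul]

theorem Phi_const_of_sum_smul_eq_zero {m n₁ n₂ : ℕ} (hm : m ≠ 0) (L : ℝ)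
    (f : Fin m → EuclideanSpace ℝ (Fin n₁) → EuclideanSpace ℝ (Fin n₂) → ℝ)
    (h : EuclideanSpace ℝ (Fin n₂) → ℝ) (w : Fin m → Fin m → ℝ)
    (x : EuclideanSpace ℝ (Fin n₁)) (Λ : Fin m → EuclideanSpace ℝ (Fin n₂))
    (z : EuclideanSpace ℝ (Fin n₂))
    (hz : ∀ i, ∑ j, (w i j - if i = j then 1 else 0) • z = 0) :
    Phi L f h w (fun _ => x) Λ (fun _ => z) = (1 / (m : ℝ)) * ∑ i, f i x z - h z := by
  simp only [Phi, hz, inner_zero_right, Finset.sum_const_zero, mul_zero, sub_zero,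
    Finset.sum_sub_distrib, Finset.sum_const, Finset.card_univ, Fintype.card_fin, nsmul_eq_mul]
  field_simp

theorem dgdmax_stationary_reformulation_implies_original_general
    {m n₁ n₂ : ℕ} (hm : 0 < m)
    (f : Fin m → EuclideanSpace ℝ (Fin n₁) → EuclideanSpace ℝ (Fin n₂) → ℝ)
    (h : EuclideanSpace ℝ (Fin n₂) → ℝ) (L : ℝ)
    (w : Fin m → Fin m → ℝ)
    (hnull : ∀ v : Fin m → ℝ,
      (∀ i, ∑ j, (w i j - if i = j then 1 else 0) * v j = 0) ↔ ∃ c : ℝ, ∀ i, v i = c)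
    (xb : EuclideanSpace ℝ (Fin n₁))
    (Lamb Yb : Fin m → EuclideanSpace ℝ (Fin n₂))
    (hmax : ∀ Y : Fin m → EuclideanSpace ℝ (Fin n₂),
      Phi L f h w (fun _ => xb) Lamb Y ≤ Phi L f h w (fun _ => xb) Lamb Yb)
    (hstat : ∀ i, ∑ j, (w i j - if i = j then 1 else 0) • Yb j = 0) :
    ∃ yb : EuclideanSpace ℝ (Fin n₂), (∀ i, Yb i = yb) ∧
      ∀ y : EuclideanSpace ℝ (Fin n₂),
        (1 / (m : ℝ)) * ∑ i, f i xb y - h y ≤ (1 / (m : ℝ)) * ∑ i, f i xb yb - h yb := by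
  have hker := sum_smul_eq_zero_iff_exists_const (E := EuclideanSpace ℝ (Fin n₂))
    (fun i j => w i j - if i = j then 1 else 0) hnull
  obtain ⟨yb, hYb⟩ := (hker Yb).mp hstat
  have hconsensus : ∀ z, Phi L f h w (fun _ => xb) Lamb (fun _ => z)
      = (1 / (m : ℝ)) * ∑ i, f i xb z - h z := fun z =>
    Phi_const_of_sum_smul_eq_zero hm.ne' L f h w xb Lamb z ((hker _).mpr ⟨z, fun _ => rfl⟩)
  refine ⟨yb, hYb, fun y => ?_⟩
  simpa only [funext hYb, hconsensus] using hmax fun _ => y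

/-- If `Yb` maximizes `Φ((xb,…,xb), Lamb, ·)` and `(W − I)Yb = 0`
(the `Λ`-gradient of `P(xb, ·)` vanishes at `Lamb`), then all blocks of `Yb` coincide with
some `yb`, and `yb` maximizes `y ↦ (1/m) Σ_i f_i(xb, y) − h(y)`. -/
theorem dgdmax_stationary_reformulation_implies_original
    {m n₁ n₂ : ℕ} (hm : 0 < m) (hn₁ : 0 < n₁) (hn₂ : 0 < n₂)
    (f : Fin m → EuclideanSpace ℝ (Fin n₁) → EuclideanSpace ℝ (Fin n₂) → ℝ)
    (h : EuclideanSpace ℝ (Fin n₂) → ℝ) (L : ℝ) (hL : 0 < L)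
    (w : Fin m → Fin m → ℝ)
    (hrow : ∀ i, ∑ j, w i j = 1)
    (hnull : ∀ v : Fin m → ℝ,
      (∀ i, ∑ j, (w i j - if i = j then 1 else 0) * v j = 0) ↔ ∃ c : ℝ, ∀ i, v i = c)
    (xb : EuclideanSpace ℝ (Fin n₁))
    (Lamb Yb : Fin m → EuclideanSpace ℝ (Fin n₂))
    (hmax : ∀ Y : Fin m → EuclideanSpace ℝ (Fin n₂),
      Phi L f h w (fun _ => xb) Lamb Y ≤ Phi L f h w (fun _ => xb) Lamb Yb)
    (hstat : ∀ i, ∑ j, (w i j - if i = j then 1 else 0) • Yb j = 0) :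
    ∃ yb : EuclideanSpace ℝ (Fin n₂), (∀ i, Yb i = yb) ∧
      ∀ y : EuclideanSpace ℝ (Fin n₂),
        (1 / (m : ℝ)) * ∑ i, f i xb y - h y ≤ (1 / (m : ℝ)) * ∑ i, f i xb yb - h yb :=
  dgdmax_stationary_reformulation_implies_original_general hm f h L w hnull xb Lamb Yb hmax hstat
end

section
/- Assume the setting, with W𝟏 = 𝟏 (each row of W sums to 1). Fix x̄ ∈ ℝ^{n₁} and Λ̄ = (λ̄_1,…,λ̄_m) ∈ (ℝ^{n₂})^m. Suppose Ȳ = (ȳ_1,…,ȳ_m) ∈ (ℝ^{n₂})^m satisfies: (a) Φ((x̄,…,x̄), Λ̄, Ȳ) ≥ Φ((x̄,…,x̄), Λ̄, Y) for every Y ∈ (ℝ^{n₂})^m; and (b) there are vectors ξ̄_1,…,ξ̄_m ∈ ℝ^{n₂} such that each ξ̄_i is a subgradient of h at ȳ_i (h(z) ≥ h(ȳ_i) + ⟨ξ̄_i, z − ȳ_i⟩ for all z) and (1/m)(∇_y f_i(x̄, ȳ_i) − ξ̄_i) = (L/(2√m)) Σ_{j=1}^m (w_{ji} − δ_{ij})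 λ̄_j for every i. Let ŷ be a maximizer of y ↦ (1/m) Σ_{i=1}^m f_i(x̄, y) − h(y) over ℝ^{n₂}, and set ȳ_avg = (1/m) Σ_{i=1}^m ȳ_i. Then (μ/2) ‖ŷ − ȳ_avg‖² ≤ (L/(2m)) Σ_{i=1}^m ‖ȳ_i − ȳ_avg‖² + (1/m) Σ_{i=1}^m ( h(ȳ_avg) − h(ȳ_i) − ⟨ξ̄_i, ȳ_avg − ȳ_i⟩ ). -/
open scoped BigOperators RealInnerProductSpace

/-!
The averaged objective `F y = (1/m) ∑ᵢ fᵢ(x̄, y) - h y` is `μ`-strongly concave, so its maximizer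
`ŷ` satisfies `μ/2 ‖ŷ - ȳ_avg‖² ≤ F ŷ - F ȳ_avg`. Because the rows of `W - I` sum to zero, `Φ` at
the consensus point `(ŷ, …, ŷ)` equals `F ŷ`, hence `F ŷ ≤ Φ(Ȳ)`. Stationarity turns the coupling
term of `Φ(Ȳ)` into `(1/m) ∑ᵢ ⟪∇_y fᵢ(x̄, ȳᵢ) - ξ̄ᵢ, ȳᵢ⟫`, and these residuals sum to zero, so `ȳᵢ`
may be replaced by `ȳᵢ - ȳ_avg`. The `L`-smoothness lower bound of each `fᵢ` at `ȳᵢ` then bounds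
`Φ(Ȳ)` by `F ȳ_avg` plus the right-hand side.
-/

open Set Filter Topology Finset

section

variable {E : Type*} [NormedAddCommGroup E] [InnerProductSpace ℝ E]

theorem strongConcaveOn_univ_of_le_add_inner_sub_sq {F : E → ℝ} {G : E → E} {μ : ℝ}
    (hF : ∀ a b, F b ≤ F a + ⟪G a, b - a⟫ - μ / 2 * ‖b - a‖ ^ 2) :
    StrongConcaveOn univ μ F := by
  refine ⟨convex_univ, fun x _ y _ s t hs ht hst ↦ ?_⟩
  obtain rfl : s = 1 - t := by linarith
  set z := (1 - t) • x + t • y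
  have hx : x - z = t • (x - y) := by module
  have hy : y - z = -(1 - t) • (x - y) := by module
  have bx := hF z x
  have by' := hF z y
  rw [hx, real_inner_smul_right, norm_smul, Real.norm_of_nonneg ht] at bx
  rw [hy, real_inner_smul_right, norm_smul, norm_neg, Real.norm_of_nonneg hs] at by'
  simp only [smul_eq_mul]
  nlinarith [mul_le_mul_of_nonneg_left bx hs, mul_le_mul_of_nonneg_left by' ht]

theorem strongConcaveOn_univ_average {ι : Type*} [Fintype ι] [Nonempty ι] {f : ι → E → ℝ}
    {G : ι → E → E} {μ : ℝ}
    (hf : ∀ i a b, f i b ≤ f i a + ⟪G i a, b - a⟫ - μ / 2 * ‖b - a‖ ^ 2) :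
    StrongConcaveOn univ μ fun y ↦ (1 / (Fintype.card ι : ℝ)) * ∑ i, f i y := by
  refine strongConcaveOn_univ_of_le_add_inner_sub_sq
    (G := fun a ↦ (1 / (Fintype.card ι : ℝ)) • ∑ i, G i a) fun a b ↦ ?_
  have hcard : (0 : ℝ) < Fintype.card ι := by exact_mod_cast Fintype.card_pos
  calc (1 / (Fintype.card ι : ℝ)) * ∑ i, f i b
      ≤ (1 / (Fintype.card ι : ℝ)) * ∑ i, (f i a + ⟪G i a, b - a⟫ - μ / 2 * ‖b - a‖ ^ 2) := by
        gcongr with i; exact hf i a b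
    _ = _ := by
        rw [sum_sub_distrib, sum_add_distrib, ← sum_inner, real_inner_smul_left, sum_const,
          card_univ, nsmul_eq_mul]
        field_simp

theorem StrongConcaveOn.sub_convexOn {s : Set E} {f g : E → ℝ} {μ : ℝ}
    (hf : StrongConcaveOn s μ f) (hg : ConvexOn ℝ s g) : StrongConcaveOn s μ (f - g) := by
  simpa [StrongConcaveOn] using hf.sub hg.uniformConvexOn_zero

theorem StrongConcaveOn.sq_norm_sub_le_of_isMaxOn {s : Set E} {f : E → ℝ} {μ : ℝ} {x y : E}
    (hf : StrongConcaveOn s μ f) (hmax : IsMaxOn f s x) (hx : x ∈ s) (hy : y ∈ s) :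
    μ / 2 * ‖x - y‖ ^ 2 ≤ f x - f y := by
  have key : ∀ a ∈ Ioo (0 : ℝ) 1, a * (μ / 2 * ‖x - y‖ ^ 2) ≤ f x - f y := by
    rintro a ⟨ha₀, ha₁⟩
    have hconc := hf.2 hx hy ha₀.le (sub_nonneg.2 ha₁.le) (add_sub_cancel a 1)
    have hz := hmax (hf.1 hx hy ha₀.le (sub_nonneg.2 ha₁.le) (add_sub_cancel a 1))
    simp only [smul_eq_mul, mem_ofPred_eq] at hconc hz
    nlinarith
  have hlim : Tendsto (fun a : ℝ ↦ a * (μ / 2 * ‖x - y‖ ^ 2)) (𝓝[<] 1)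
      (𝓝 (μ / 2 * ‖x - y‖ ^ 2)) :=
    ((continuous_mul_const _).tendsto' 1 _ (one_mul _)).mono_left nhdsWithin_le_nhds
  exact le_of_tendsto hlim (eventually_of_mem (Ioo_mem_nhdsLT zero_lt_one) key)

theorem sum_inner_sum_smul_comm {ι : Type*} [Fintype ι] (a : ι → ι → ℝ) (u v : ι → E) :
    ∑ i, ⟪u i, ∑ j, a i j • v j⟫ = ∑ j, ⟪∑ i, a i j • u i, v j⟫ := by
  simp only [inner_sum, sum_inner, real_inner_smul_left, real_inner_smul_right]
  exact sum_comm

variable [CompleteSpace E]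

theorem le_add_inner_add_sq_of_inner_gradient_sub_le {F : E → ℝ} {G : E → E} {c : ℝ}
    (hF : ∀ z, HasGradientAt F (G z) z)
    (hG : ∀ p q, ⟪G p - G q, p - q⟫ ≤ c * ‖p - q‖ ^ 2) (a b : E) :
    F b ≤ F a + ⟪G a, b - a⟫ + c / 2 * ‖b - a‖ ^ 2 := by
  set v := b - a
  -- `t * φ' t = ⟪G (a + t • v) - G a, t • v⟫ - c * ‖t • v‖ ^ 2 ≤ 0`, so `φ 1 ≤ φ 0`.
  let φ : ℝ → ℝ := fun t ↦ F (a + t • v) - t * ⟪G a, v⟫ - c / 2 * t ^ 2 * ‖v‖ ^ 2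
  have hφ : ∀ t, HasDerivAt φ (⟪G (a + t • v), v⟫ - ⟪G a, v⟫ - c * t * ‖v‖ ^ 2) t := by
    intro t
    have hline : HasDerivAt (fun s : ℝ ↦ a + s • v) v t := by
      simpa using ((hasDerivAt_id t).smul_const v).const_add a
    have hFline := (hF (a + t • v)).hasFDerivAt.comp_hasDerivAt t hline
    simp only [InnerProductSpace.toDual_apply_apply] at hFline
    refine ((hFline.sub ((hasDerivAt_id t).mul_const ⟪G a, v⟫)).sub
      (((hasDerivAt_pow 2 t).const_mul (c / 2)).mul_const (‖v‖ ^ 2))).congr_deriv ?_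
    simp only [Nat.cast_ofNat]
    ring
  have hanti : AntitoneOn φ (Icc 0 1) := by
    refine antitoneOn_of_hasDerivWithinAt_nonpos (convex_Icc 0 1)
      (HasDerivAt.continuousOn fun t _ ↦ hφ t) (fun t _ ↦ (hφ t).hasDerivWithinAt) ?_
    intro t ht
    rw [interior_Icc] at ht
    have hmono := hG (a + t • v) a
    rw [add_sub_cancel_left, real_inner_smul_right, norm_smul, Real.norm_of_nonneg ht.1.le,
      inner_sub_left] at hmono
    nlinarith [ht.1]
  have := hanti (left_mem_Icc.2 zero_le_one) (right_mem_Icc.2 zero_le_one) zero_le_one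
  simp only [φ, v, one_smul, zero_smul, add_zero, add_sub_cancel] at this
  linarith

theorem HasGradientAt.neg {F : E → ℝ} {x g : E} (hF : HasGradientAt F g x) :
    HasGradientAt (fun y ↦ -F y) (-g) x := by
  rw [hasGradientAt_iff_hasFDerivAt, map_neg]
  exact hF.hasFDerivAt.neg

theorem add_inner_sub_sq_le_of_lipschitz_gradient {F : E → ℝ} {G : E → E} {K : ℝ}
    (hF : ∀ z, HasGradientAt F (G z) z)
    (hG : ∀ p q, ‖G p - G q‖ ≤ K * ‖p - q‖) (a b : E) :
    F a + ⟪G a, b - a⟫ - K / 2 * ‖b - a‖ ^ 2 ≤ F b := by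
  have hneg : ∀ p q, ⟪-G p - -G q, p - q⟫ ≤ K * ‖p - q‖ ^ 2 := fun p q ↦ by
    calc ⟪-G p - -G q, p - q⟫ ≤ ‖G p - G q‖ * ‖p - q‖ := by
          rw [neg_sub_neg, norm_sub_rev]; exact real_inner_le_norm _ _
      _ ≤ K * ‖p - q‖ * ‖p - q‖ := by gcongr; exact hG p q
      _ = K * ‖p - q‖ ^ 2 := by ring
  have := le_add_inner_add_sq_of_inner_gradient_sub_le (fun z ↦ (hF z).neg) hneg a b
  rw [inner_neg_left] at this
  linarith

end

section

variable {m n₁ n₂ : ℕ} {L : ℝ}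
    {f : Fin m → EuclideanSpace ℝ (Fin n₁) → EuclideanSpace ℝ (Fin n₂) → ℝ}
    {h : EuclideanSpace ℝ (Fin n₂) → ℝ} {w : Fin m → Fin m → ℝ}

theorem Phi_consensus (hm : m ≠ 0) (hrow : ∀ i, ∑ j, w i j = 1)
    (X : Fin m → EuclideanSpace ℝ (Fin n₁)) (Λ : Fin m → EuclideanSpace ℝ (Fin n₂))
    (y : EuclideanSpace ℝ (Fin n₂)) :
    Phi L f h w X Λ (fun _ ↦ y) = (1 / (m : ℝ)) * ∑ i, f i (X i) y - h y := by
  have hrow_sub : ∀ i, ∑ j, (w i j - if i = j then 1 else 0) • y = 0 := fun i ↦ by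
    simp [← sum_smul, sum_sub_distrib, hrow]
  simp only [Phi, hrow_sub, inner_zero_right, sum_const_zero, mul_zero, sub_zero, sum_sub_distrib,
    sum_const, card_univ, Fintype.card_fin, nsmul_eq_mul]
  field_simp

theorem Phi_eq_of_stationary (hrow : ∀ i, ∑ j, w i j = 1)
    (X : Fin m → EuclideanSpace ℝ (Fin n₁)) (Λ Y r : Fin m → EuclideanSpace ℝ (Fin n₂))
    (hr : ∀ i, (1 / (m : ℝ)) • r i
        = (L / (2 * Real.sqrt (m : ℝ))) • ∑ j, (w j i - if i = j then 1 else 0) • Λ j)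
    (c : EuclideanSpace ℝ (Fin n₂)) :
    Phi L f h w X Λ Y = (1 / (m : ℝ)) * ∑ i, (f i (X i) (Y i) - h (Y i) - ⟪r i, Y i - c⟫) := by
  have hcoupling : (L / (2 * Real.sqrt (m : ℝ))) *
      ∑ i, ⟪Λ i, ∑ j, (w i j - if i = j then 1 else 0) • Y j⟫
        = ∑ i, ⟪(1 / (m : ℝ)) • r i, Y i⟫ := by
    rw [sum_inner_sum_smul_comm, mul_sum]
    refine sum_congr rfl fun i _ ↦ ?_
    rw [hr, real_inner_smul_left]
    simp only [eq_comm (b := i)]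
  have hsum : ∑ i, (1 / (m : ℝ)) • r i = 0 := by
    simp only [hr, ← smul_sum]
    rw [sum_comm]
    simp [← sum_smul, sum_sub_distrib, hrow]
  have hc : ∑ i, ⟪(1 / (m : ℝ)) • r i, c⟫ = 0 := by rw [← sum_inner, hsum, inner_zero_left]
  simp only [Phi, hcoupling, inner_sub_right, mul_sum, real_inner_smul_left, mul_sub,
    sum_sub_distrib] at hc ⊢
  linarith

theorem Phi_le_of_stationary (hm : m ≠ 0) (hrow : ∀ i, ∑ j, w i j = 1)
    {G : Fin m → EuclideanSpace ℝ (Fin n₂) → EuclideanSpace ℝ (Fin n₂)}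
    (x : EuclideanSpace ℝ (Fin n₁))
    (hsmooth : ∀ i a b, f i x a + ⟪G i a, b - a⟫ - L / 2 * ‖b - a‖ ^ 2 ≤ f i x b)
    (Λ Y ξ : Fin m → EuclideanSpace ℝ (Fin n₂))
    (hstat : ∀ i, (1 / (m : ℝ)) • (G i (Y i) - ξ i)
        = (L / (2 * Real.sqrt (m : ℝ))) • ∑ j, (w j i - if i = j then 1 else 0) • Λ j)
    (c : EuclideanSpace ℝ (Fin n₂)) :
    Phi L f h w (fun _ ↦ x) Λ Y
      ≤ (1 / (m : ℝ)) * ∑ i, f i x c - h c + (L / (2 * (m : ℝ))) * ∑ i, ‖Y i - c‖ ^ 2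
        + (1 / (m : ℝ)) * ∑ i, (h c - h (Y i) - ⟪ξ i, c - Y i⟫) := by
  have hterm : ∀ i, f i x (Y i) - h (Y i) - ⟪G i (Y i) - ξ i, Y i - c⟫
      ≤ f i x c - h c + L / 2 * ‖Y i - c‖ ^ 2 + (h c - h (Y i) - ⟪ξ i, c - Y i⟫) := fun i ↦ by
    have := hsmooth i (Y i) c
    rw [← neg_sub c (Y i), inner_neg_right, inner_sub_left, norm_neg]
    linarith
  rw [Phi_eq_of_stationary hrow _ Λ Y _ hstat c]
  calc _ ≤ (1 / (m : ℝ)) * ∑ i, (f i x c - h c + L / 2 * ‖Y i - c‖ ^ 2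
        + (h c - h (Y i) - ⟪ξ i, c - Y i⟫)) := by
        gcongr with i; exact hterm i
    _ = _ := by
        simp only [sum_add_distrib, sum_sub_distrib, sum_const, card_univ, Fintype.card_fin,
          nsmul_eq_mul, ← mul_sum]
        field_simp

end

theorem dgdmax_dual_consensus_to_original_gap_general
    {m n₁ n₂ : ℕ} (hm : 0 < m)
    (L μ : ℝ) (hμ : 0 < μ) (hLμ : μ ≤ L)
    (f : Fin m → EuclideanSpace ℝ (Fin n₁) → EuclideanSpace ℝ (Fin n₂) → ℝ)
    (Gx : Fin m → EuclideanSpace ℝ (Fin n₁) → EuclideanSpace ℝ (Fin n₂) →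
      EuclideanSpace ℝ (Fin n₁))
    (Gy : Fin m → EuclideanSpace ℝ (Fin n₁) → EuclideanSpace ℝ (Fin n₂) →
      EuclideanSpace ℝ (Fin n₂))
    (hGy : ∀ i x y, HasGradientAt (fun y' => f i x y') (Gy i x y) y)
    (hLip : ∀ i x y x' y',
      ‖Gx i x y - Gx i x' y'‖ ^ 2 + ‖Gy i x y - Gy i x' y'‖ ^ 2
        ≤ L ^ 2 * (‖x - x'‖ ^ 2 + ‖y - y'‖ ^ 2))
    (hconc : ∀ i x y y', ⟪y - y', Gy i x y - Gy i x y'⟫ ≤ -μ * ‖y - y'‖ ^ 2)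
    (h : EuclideanSpace ℝ (Fin n₂) → ℝ) (hconv : ConvexOn ℝ Set.univ h)
    (w : Fin m → Fin m → ℝ) (hrow : ∀ i, ∑ j, w i j = 1)
    (xb : EuclideanSpace ℝ (Fin n₁))
    (Lamb Yb : Fin m → EuclideanSpace ℝ (Fin n₂))
    (hmax : ∀ Y : Fin m → EuclideanSpace ℝ (Fin n₂),
      Phi L f h w (fun _ => xb) Lamb Y ≤ Phi L f h w (fun _ => xb) Lamb Yb)
    (ξ : Fin m → EuclideanSpace ℝ (Fin n₂))
    (hstat : ∀ i, (1 / (m : ℝ)) • (Gy i xb (Yb i) - ξ i)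
        = (L / (2 * Real.sqrt (m : ℝ))) •
            ∑ j, (w j i - if i = j then 1 else 0) • Lamb j)
    (yh : EuclideanSpace ℝ (Fin n₂))
    (hyh : ∀ y : EuclideanSpace ℝ (Fin n₂),
      (1 / (m : ℝ)) * ∑ i, f i xb y - h y ≤ (1 / (m : ℝ)) * ∑ i, f i xb yh - h yh) :
    (μ / 2) * ‖yh - (1 / (m : ℝ)) • ∑ i, Yb i‖ ^ 2
      ≤ (L / (2 * (m : ℝ))) * ∑ i, ‖Yb i - (1 / (m : ℝ)) • ∑ k, Yb k‖ ^ 2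
        + (1 / (m : ℝ)) *
            ∑ i, (h ((1 / (m : ℝ)) • ∑ k, Yb k) - h (Yb i)
              - ⟪ξ i, (1 / (m : ℝ)) • (∑ k, Yb k) - Yb i⟫) := by
  have hm' : m ≠ 0 := hm.ne'
  have : Nonempty (Fin m) := ⟨⟨0, hm⟩⟩
  set ybar := (1 / (m : ℝ)) • ∑ k, Yb k
  have hquad : ∀ i a b, f i xb b ≤ f i xb a + ⟪Gy i xb a, b - a⟫ - μ / 2 * ‖b - a‖ ^ 2 :=
    fun i a b ↦ by
      have := le_add_inner_add_sq_of_inner_gradient_sub_le (hGy i xb)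
        (fun p q ↦ real_inner_comm (p - q) _ ▸ hconc i xb p q) a b
      linarith
  have hGlip : ∀ i p q, ‖Gy i xb p - Gy i xb q‖ ≤ L * ‖p - q‖ := fun i p q ↦ by
    have hL : 0 ≤ L := hμ.le.trans hLμ
    have := hLip i xb p xb q
    rw [sub_self, norm_zero, zero_pow two_ne_zero, zero_add] at this
    exact (sq_le_sq₀ (norm_nonneg _) (by positivity)).1
      (by nlinarith [sq_nonneg ‖Gx i xb p - Gx i xb q‖])
  have hconcave := strongConcaveOn_univ_average hquad
  rw [Fintype.card_fin] at hconcave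
  have hgrowth := (hconcave.sub_convexOn hconv).sq_norm_sub_le_of_isMaxOn
    (isMaxOn_univ_iff.2 hyh) (mem_univ yh) (mem_univ ybar)
  have hupper : (1 / (m : ℝ)) * ∑ i, f i xb yh - h yh ≤ Phi L f h w (fun _ ↦ xb) Lamb Yb :=
    (Phi_consensus hm' hrow (fun _ ↦ xb) Lamb yh).symm.trans_le (hmax _)
  have hlower := Phi_le_of_stationary (f := f) (h := h) hm' hrow xb
    (fun i ↦ add_inner_sub_sq_le_of_lipschitz_gradient (hGy i xb) (hGlip i)) Lamb Yb ξ hstat ybar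
  simp only [Pi.sub_apply] at hgrowth
  linarith

/-- Key inequality relating the dual consensus error of a stationary
point of the reformulation to the distance of the averaged dual variable from the exact
maximizer of the original problem:
`(μ/2)‖ŷ − ȳ_avg‖² ≤ (L/(2m)) Σ_i ‖ȳ_i − ȳ_avg‖²
  + (1/m) Σ_i (h(ȳ_avg) − h(ȳ_i) − ⟨ξ̄_i, ȳ_avg − ȳ_i⟩)`. -/
theorem dgdmax_dual_consensus_to_original_gap
    {m n₁ n₂ : ℕ} (hm : 0 < m) (hn₁ : 0 < n₁) (hn₂ : 0 < n₂)
    (L μ : ℝ) (hμ : 0 < μ) (hLμ : μ ≤ L)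
    (f : Fin m → EuclideanSpace ℝ (Fin n₁) → EuclideanSpace ℝ (Fin n₂) → ℝ)
    (Gx : Fin m → EuclideanSpace ℝ (Fin n₁) → EuclideanSpace ℝ (Fin n₂) →
      EuclideanSpace ℝ (Fin n₁))
    (Gy : Fin m → EuclideanSpace ℝ (Fin n₁) → EuclideanSpace ℝ (Fin n₂) →
      EuclideanSpace ℝ (Fin n₂))
    (hGx : ∀ i x y, HasGradientAt (fun x' => f i x' y) (Gx i x y) x)
    (hGy : ∀ i x y, HasGradientAt (fun y' => f i x y') (Gy i x y) y)
    (hLip : ∀ i x y x' y',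
      ‖Gx i x y - Gx i x' y'‖ ^ 2 + ‖Gy i x y - Gy i x' y'‖ ^ 2
        ≤ L ^ 2 * (‖x - x'‖ ^ 2 + ‖y - y'‖ ^ 2))
    (hconc : ∀ i x y y', ⟪y - y', Gy i x y - Gy i x y'⟫ ≤ -μ * ‖y - y'‖ ^ 2)
    (h : EuclideanSpace ℝ (Fin n₂) → ℝ) (hconv : ConvexOn ℝ Set.univ h)
    (w : Fin m → Fin m → ℝ) (hrow : ∀ i, ∑ j, w i j = 1)
    (xb : EuclideanSpace ℝ (Fin n₁))
    (Lamb Yb : Fin m → EuclideanSpace ℝ (Fin n₂))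
    (hmax : ∀ Y : Fin m → EuclideanSpace ℝ (Fin n₂),
      Phi L f h w (fun _ => xb) Lamb Y ≤ Phi L f h w (fun _ => xb) Lamb Yb)
    (ξ : Fin m → EuclideanSpace ℝ (Fin n₂))
    (hsub : ∀ i, ∀ z, h (Yb i) + ⟪ξ i, z - Yb i⟫ ≤ h z)
    (hstat : ∀ i, (1 / (m : ℝ)) • (Gy i xb (Yb i) - ξ i)
        = (L / (2 * Real.sqrt (m : ℝ))) •
            ∑ j, (w j i - if i = j then 1 else 0) • Lamb j)
    (yh : EuclideanSpace ℝ (Fin n₂))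
    (hyh : ∀ y : EuclideanSpace ℝ (Fin n₂),
      (1 / (m : ℝ)) * ∑ i, f i xb y - h y ≤ (1 / (m : ℝ)) * ∑ i, f i xb yh - h yh) :
    (μ / 2) * ‖yh - (1 / (m : ℝ)) • ∑ i, Yb i‖ ^ 2
      ≤ (L / (2 * (m : ℝ))) * ∑ i, ‖Yb i - (1 / (m : ℝ)) • ∑ k, Yb k‖ ^ 2
        + (1 / (m : ℝ)) *
            ∑ i, (h ((1 / (m : ℝ)) • ∑ k, Yb k) - h (Yb i)
              - ⟪ξ i, (1 / (m : ℝ)) • (∑ k, Yb k) - Yb i⟫) :=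
  dgdmax_dual_consensus_to_original_gap_general hm L μ hμ hLμ f Gx Gy hGy hLip hconc h hconv w hrow
    xb Lamb Yb hmax ξ hstat yh hyh
end

section
/- Consider f : ℝ × ℝ → ℝ given by f(x, y) = −x²y + y²/2 and the associated operator B(x,y) = (∂f/∂x (x,y), −∂f/∂y (x,y)) = (−2xy, x² − y). The Minty variational inequality condition on [−1,1] × ℝ fails for this operator: for every x̄ ∈ [−1, 1] and every ȳ ∈ ℝ, there exist x ∈ [−1, 1] and y ∈ ℝ such that (−2xy)(x − x̄) + (x² − y)(y − ȳ) < 0. (In fact, for any fixed x ∈ [−1,1], the quantity (−2xy)(x − x̄) + (x² − y)(y − ȳ) tends to −∞ as |y| → ∞.) -/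
open Filter

/-- Written as `y (a y + b) + c`: for large `|y|` the two factors have opposite signs. -/
theorem tendsto_quadratic_cocompact_atBot {a : ℝ} (ha : a < 0) (b c : ℝ) :
    Tendsto (fun y : ℝ => a * y ^ 2 + b * y + c) (cocompact ℝ) atBot := by
  have hlin_top : Tendsto (fun y : ℝ => a * y + b) atTop atBot :=
    tendsto_atBot_add_const_right _ b (tendsto_id.const_mul_atTop_of_neg ha)
  have hlin_bot : Tendsto (fun y : ℝ => a * y + b) atBot atTop :=
    tendsto_atTop_add_const_right _ b (tendsto_id.const_mul_atBot_of_neg ha)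
  have hprod : Tendsto (fun y : ℝ => y * (a * y + b)) (cocompact ℝ) atBot := by
    rw [cocompact_eq_atBot_atTop]
    exact tendsto_sup.2 ⟨tendsto_id.atBot_mul_atTop₀ hlin_bot, tendsto_id.atTop_mul_atBot₀ hlin_top⟩
  exact (tendsto_atBot_add_const_right _ c hprod).congr fun y => by ring

/-- The Minty variational inequality condition fails on `[−1,1] × ℝ`
for the gradient-descent-ascent operator `B(x,y) = (−2xy, x² − y)` of
`f(x,y) = −x²y + y²/2`: for every candidate point `(x̄, ȳ)` there is `(x, y)` in the set
with `⟨B(x,y), (x,y) − (x̄,ȳ)⟩ < 0`; in fact, for each fixed `x ∈ [−1,1]` this inner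
product tends to `−∞` as `|y| → ∞`. -/
theorem minty_fails_for_ncsc_example :
    (∀ xb ∈ Set.Icc (-1 : ℝ) 1, ∀ yb : ℝ, ∃ x ∈ Set.Icc (-1 : ℝ) 1, ∃ y : ℝ,
      (-2 * x * y) * (x - xb) + (x ^ 2 - y) * (y - yb) < 0) ∧
    (∀ xb yb : ℝ, ∀ x ∈ Set.Icc (-1 : ℝ) 1,
      Filter.Tendsto (fun y : ℝ => (-2 * x * y) * (x - xb) + (x ^ 2 - y) * (y - yb))
        (Filter.cocompact ℝ) Filter.atBot) := by
  have hdiverge : ∀ xb yb x : ℝ,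
      Tendsto (fun y : ℝ => (-2 * x * y) * (x - xb) + (x ^ 2 - y) * (y - yb))
        (cocompact ℝ) atBot := fun xb yb x =>
    (tendsto_quadratic_cocompact_atBot (by norm_num : (-1 : ℝ) < 0)
      (yb + x ^ 2 - 2 * x * (x - xb)) (-(x ^ 2 * yb))).congr fun y => by ring
  refine ⟨fun xb _ yb => ⟨0, by norm_num, ?_⟩, fun xb yb x _ => hdiverge xb yb x⟩
  exact ((hdiverge xb yb 0).eventually (eventually_lt_atBot 0)).exists
end
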